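/- arXiv:2103.14112 — 9 statements merged into one kernel-verified Lean document; each statement's English description precedes it below -/
import Mathlib

section
/- Let Π = (Σ_in, Σ_out, P) be an LCL problem in normal form that is mixing. Then Π is not in the class MEASURE: there exist a standard Borel space X, an aperiodic Borel automorphism S of X, a Borel probability measure μ on X, and a Borel map i : X → Σ_in such that no Borel map f : X → Σ_out satisfies P(i x, i (S x), f x, f (S x)) for μ-almost every x ∈ X. -/
/-!
Fix a mixing triple `(σ, Υ, ∇)` and let `A` be the group generated by `Γ_{σ,(Υ,∇)}`; since the
permutations act on finitely many `∇`-classes, every element of `A` is induced by a permutation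
`σ`-block of positive length. Take `Z = Y × A^ℤ` with `Y = ∏ₘ ℤ/(m+2)` (so that the rotation by
`(1, 1, …)` has no periodic points), its Haar measure, and `T` = rotation × shift, and build the
Kakutani tower over `T` whose column over `z` carries the block of the letter `z 0`.

An almost everywhere solution `f`, read off at the bottoms of the columns, gives a labelling `φ` of
`Z` such that `φ z` reaches `φ (T z)` through the block of `z 0`. Blocks only go up in `⪯`, and a
measure-preserving map cannot go up a preorder with positive probability, so almost surely `φ z`
and `φ (T z)` lie in the same `ℙ`-class, hence in `dom ∇`, and the `∇`-class `ψ z` of `φ z`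
satisfies the cocycle equation `ψ (T z) = (z 0) ψ z`. Approximating `ψ` by a function of the
coordinates in a finite window and changing one coordinate outside the windows around `0` and `n`
then produces a `∇`-class fixed by every letter, contradicting mixing.
-/

open MeasureTheory

section LCL

variable {Sin Sout : Type}

/-- `BlockType P B t a b`: there is a directed path from `(0, a)` to `(t, b)` in the
block graph of the block `B` (of length `t`) of the LCL problem with constraint `P`. -/
def BlockType (P : Sin → Sin → Sout → Sout → Prop) (B : ℕ → Sin) (t : ℕ)
    (a b : Sout) : Prop :=
  ∃ g : ℕ → Sout, g 0 = a ∧ g t = b ∧ ∀ j < t, P (B j) (B (j + 1)) (g j) (g (j + 1))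

/-- A subpartition `(Υ, ∇)` of `Sout`: an equivalence relation `nabla` on a subset
`dom` of `Sout`, together with an equivalence relation `pp` (the relation `ℙ`) on all of
`Sout` that is coarser than `nabla` on `dom`, and a partial order `preceq` (`⪯`) on the
`ℙ`-classes (modelled as a `ℙ`-invariant preorder on `Sout` which is antisymmetric
modulo `ℙ`). -/
structure Subpartition (Sout : Type) where
  dom : Set Sout
  nabla : Sout → Sout → Prop
  nabla_dom_left : ∀ {a b}, nabla a b → a ∈ dom
  nabla_dom_right : ∀ {a b}, nabla a b → b ∈ dom
  nabla_refl : ∀ a ∈ dom, nabla a a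
  nabla_symm : ∀ {a b}, nabla a b → nabla b a
  nabla_trans : ∀ {a b c}, nabla a b → nabla b c → nabla a c
  pp : Sout → Sout → Prop
  pp_equiv : Equivalence pp
  pp_coarser : ∀ {a b}, nabla a b → pp a b
  preceq : Sout → Sout → Prop
  preceq_refl : ∀ a, preceq a a
  preceq_trans : ∀ {a b c}, preceq a b → preceq b c → preceq a c
  preceq_antisymm : ∀ {a b}, preceq a b → preceq b a → pp a b
  preceq_congr : ∀ {a a' b b'}, pp a a' → pp b b' → preceq a b → preceq a' b'

/-- The setoid of the equivalence relation `∇` on its domain. -/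
def Subpartition.domSetoid (sp : Subpartition Sout) : Setoid sp.dom where
  r x y := sp.nabla x y
  iseqv := ⟨fun x => sp.nabla_refl x x.2, fun h => sp.nabla_symm h,
    fun h h' => sp.nabla_trans h h'⟩

/-- The set of `∇`-classes of a subpartition. -/
def Subpartition.Classes (sp : Subpartition Sout) : Type := Quotient sp.domSetoid

/-- The `∇`-class of an element of the domain of `∇`. -/
def Subpartition.cls (sp : Subpartition Sout) (a : sp.dom) : sp.Classes :=
  Quotient.mk sp.domSetoid a

/-- `B` (of length `t`) is a permutation `σ`-block on the subpartition `sp`,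
witnessed by the permutation `π` of the set of `∇`-classes. -/
def IsPermutationBlock (P : Sin → Sin → Sout → Sout → Prop) (σ : Sin)
    (sp : Subpartition Sout) (B : ℕ → Sin) (t : ℕ)
    (π : Equiv.Perm sp.Classes) : Prop :=
  B 0 = σ ∧ B t = σ ∧
  (∀ a b : sp.dom, π (sp.cls a) = sp.cls b → sp.pp a b) ∧
  (∀ a b : Sout, BlockType P B t a b → sp.preceq a b) ∧
  (∀ a b : Sout, a ∉ sp.dom → BlockType P B t a b → ¬ sp.pp a b) ∧
  (∀ a b : sp.dom, BlockType P B t (a : Sout) (b : Sout) → sp.pp a b →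
    π (sp.cls a) = sp.cls b)

/-- `Γ_{σ,(Υ,∇)}`: the set of permutations of the `∇`-classes induced by
permutation `σ`-blocks on the subpartition. -/
def Gamma (P : Sin → Sin → Sout → Sout → Prop) (σ : Sin) (sp : Subpartition Sout) :
    Set (Equiv.Perm sp.Classes) :=
  {π | ∃ B t, IsPermutationBlock P σ sp B t π}

/-- `Π` is `(σ, Υ, ∇)`-mixing: there is at least one permutation `σ`-block on the
subpartition and no `∇`-class is fixed by all elements of `Γ_{σ,(Υ,∇)}`. -/
def IsMixingAt (P : Sin → Sin → Sout → Sout → Prop) (σ : Sin)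
    (sp : Subpartition Sout) : Prop :=
  (∃ B t π, IsPermutationBlock P σ sp B t π) ∧
  ¬ ∃ c : sp.Classes, ∀ π ∈ Gamma P σ sp, π c = c

/-- `Π` is mixing if it is `(σ, Υ, ∇)`-mixing for some `σ` and some subpartition. -/
def IsMixing (P : Sin → Sin → Sout → Sout → Prop) : Prop :=
  ∃ (σ : Sin) (sp : Subpartition Sout), IsMixingAt P σ sp

/-- An automorphism is aperiodic if no nonzero integer power has a fixed point. -/
def Aperiodic {X : Type} (S : Equiv.Perm X) : Prop :=
  ∀ (n : ℤ) (x : X), (S ^ n) x = x → n = 0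

/-- The class `BOREL`. -/
def InBOREL (P : Sin → Sin → Sout → Sout → Prop) : Prop :=
  ∀ (X : Type) [MeasurableSpace X] [StandardBorelSpace X],
    ∀ S : Equiv.Perm X, Measurable S → Measurable S.symm → Aperiodic S →
    ∀ i : X → Sin, (∀ σ : Sin, MeasurableSet (i ⁻¹' {σ})) →
    ∃ f : X → Sout, (∀ τ : Sout, MeasurableSet (f ⁻¹' {τ})) ∧
      ∀ x, P (i x) (i (S x)) (f x) (f (S x))

/-- The class `MEASURE`. -/
def InMEASURE (P : Sin → Sin → Sout → Sout → Prop) : Prop :=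
  ∀ (X : Type) [MeasurableSpace X] [StandardBorelSpace X],
    ∀ S : Equiv.Perm X, Measurable S → Measurable S.symm → Aperiodic S →
    ∀ μ : Measure X, IsProbabilityMeasure μ →
    ∀ i : X → Sin, (∀ σ : Sin, MeasurableSet (i ⁻¹' {σ})) →
    ∃ f : X → Sout, (∀ τ : Sout, MeasurableSet (f ⁻¹' {τ})) ∧
      ∀ᵐ x ∂μ, P (i x) (i (S x)) (f x) (f (S x))

/-- The class `BAIRE`. -/
def InBAIRE (P : Sin → Sin → Sout → Sout → Prop) : Prop :=
  ∀ (X : Type) [TopologicalSpace X] [PolishSpace X] [MeasurableSpace X] [BorelSpace X],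
    ∀ S : Equiv.Perm X, Measurable S → Measurable S.symm → Aperiodic S →
    ∀ i : X → Sin, (∀ σ : Sin, MeasurableSet (i ⁻¹' {σ})) →
    ∃ f : X → Sout, (∀ τ : Sout, MeasurableSet (f ⁻¹' {τ})) ∧
      {x | P (i x) (i (S x)) (f x) (f (S x))} ∈ residual X

/-- The shift action of `ℤ` on a space of doubly infinite sequences. -/
def shiftZ {α : Type} (n : ℤ) (y : ℤ → α) : ℤ → α := fun k => y (n + k)

/-- `μ` is the product over `ℤ` of products over `ℕ` of uniform (coin-flipping)
measures on `{0,1}`: every finite cylinder has the expected measure. -/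
def IsCoinFlipMeasure (μ : Measure (ℤ → ℕ → Bool)) : Prop :=
  IsProbabilityMeasure μ ∧
  ∀ (s : Finset (ℤ × ℕ)) (ε : ℤ × ℕ → Bool),
    μ {x | ∀ p ∈ s, x p.1 p.2 = ε p} = (1 / 2 : ENNReal) ^ s.card

/-- The class `fiid`. -/
def InFIID (P : Sin → Sin → Sout → Sout → Prop) : Prop :=
  letI : MeasurableSpace Sin := ⊤
  letI : MeasurableSpace Sout := ⊤
  ∃ F : (ℤ → Sin) × (ℤ → ℕ → Bool) → (ℤ → Sout),
    Measurable F ∧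
    (∀ (n : ℤ) (I : ℤ → Sin) (x : ℤ → ℕ → Bool),
      F (shiftZ n I, shiftZ n x) = shiftZ n (F (I, x))) ∧
    ∀ μ : Measure (ℤ → ℕ → Bool), IsCoinFlipMeasure μ →
      ∀ I : ℤ → Sin, ∀ᵐ x ∂μ,
        ∀ i : ℤ, P (I i) (I (i + 1)) (F (I, x) i) (F (I, x) (i + 1))

end LCL

open scoped ENNReal symmDiff

instance Subpartition.finite_classes {Sout : Type} [Finite Sout] (sp : Subpartition Sout) :
    Finite sp.Classes :=
  Quotient.finite _

section PermutationBlocks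

variable {Sin Sout : Type} {P : Sin → Sin → Sout → Sout → Prop} {σ : Sin}
  {sp : Subpartition Sout}

def blockAppend (B : ℕ → Sin) (t : ℕ) (B' : ℕ → Sin) : ℕ → Sin :=
  fun j => if j ≤ t then B j else B' (j - t)

lemma BlockType.append {B B' : ℕ → Sin} {t t' : ℕ} (hBB' : B t = B' 0) {a b c : Sout}
    (h : BlockType P B t a b) (h' : BlockType P B' t' b c) :
    BlockType P (blockAppend B t B') (t + t') a c := by
  obtain ⟨g, rfl, rfl, hg⟩ := h
  obtain ⟨g', hg'0, rfl, hg'⟩ := h'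
  refine ⟨fun j => if j ≤ t then g j else g' (j - t), by simp, ?_, fun j hj => ?_⟩
  · rcases Nat.eq_zero_or_pos t' with rfl | ht'
    · simp [hg'0]
    · simp [show ¬ t + t' ≤ t by omega]
  · simp only [blockAppend]
    by_cases hjt : j < t
    · simpa [hjt.le, show j + 1 ≤ t by omega] using hg j hjt
    · have := hg' (j - t) (by omega)
      rw [show j - t + 1 = j + 1 - t by omega] at this
      by_cases hj : j = t
      · subst hj; simpa [hBB', hg'0] using this
      · simpa [show ¬ j ≤ t by omega, show ¬ j + 1 ≤ t by omega] using this

lemma BlockType.of_append {B B' : ℕ → Sin} {t t' : ℕ} (hBB' : B t = B' 0) {a c : Sout}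
    (h : BlockType P (blockAppend B t B') (t + t') a c) :
    ∃ b, BlockType P B t a b ∧ BlockType P B' t' b c := by
  obtain ⟨g, rfl, rfl, hg⟩ := h
  refine ⟨g t, ⟨g, rfl, rfl, fun j hj => ?_⟩, ⟨fun j => g (t + j), rfl, rfl, fun j hj => ?_⟩⟩
  · simpa [blockAppend, hj.le, show j + 1 ≤ t by omega] using hg j (by omega)
  · have := hg (t + j) (by omega)
    rcases Nat.eq_zero_or_pos j with rfl | hj0
    · simpa [blockAppend, hBB'] using this
    · simpa [blockAppend, show ¬ t + j ≤ t by omega, show ¬ t + j + 1 ≤ t by omega,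
        Nat.add_sub_cancel_left, Nat.add_assoc] using this


lemma IsPermutationBlock.append {B B' : ℕ → Sin} {t t' : ℕ} {π π' : Equiv.Perm sp.Classes}
    (hB : IsPermutationBlock P σ sp B t π) (hB' : IsPermutationBlock P σ sp B' t' π') :
    IsPermutationBlock P σ sp (blockAppend B t B') (t + t') (π' * π) := by
  obtain ⟨hB0, hBt, hπ, hle, hout, hcls⟩ := hB
  obtain ⟨hB'0, hB't, hπ', hle', hout', hcls'⟩ := hB'
  have hmid : B t = B' 0 := hBt.trans hB'0.symm
  have hpp := sp.pp_equiv
  refine ⟨by simp [blockAppend, hB0], ?_, fun a c hac => ?_, fun a c hac => ?_,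
    fun a c ha hac hac' => ?_, fun a c hac hac' => ?_⟩
  · rcases Nat.eq_zero_or_pos t' with rfl | ht'
    · simpa [blockAppend] using hBt
    · simpa [blockAppend, show ¬ t + t' ≤ t by omega] using hB't
  · obtain ⟨b, hb⟩ := Quotient.exists_rep (π (sp.cls a))
    exact hpp.trans (hπ a b hb.symm) (hπ' b c (by rw [← hac]; exact congrArg π' hb))
  · obtain ⟨b, hab, hbc⟩ := BlockType.of_append hmid hac
    exact sp.preceq_trans (hle a b hab) (hle' b c hbc)
  -- In the remaining two cases `a ⪯ b ⪯ c` with `ℙ(a) = ℙ(c)` squeezes `ℙ(b)` to `ℙ(a)`.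
  · obtain ⟨b, hab, hbc⟩ := BlockType.of_append hmid hac
    exact hout a b ha hab <| sp.preceq_antisymm (hle a b hab)
      (sp.preceq_congr (hpp.refl b) (hpp.symm hac') (hle' b c hbc))
  · obtain ⟨b, hab, hbc⟩ := BlockType.of_append hmid hac
    have hab' : sp.pp a b := sp.preceq_antisymm (hle a b hab)
      (sp.preceq_congr (hpp.refl b) (hpp.symm hac') (hle' b c hbc))
    have hbc' : sp.pp b c := hpp.trans (hpp.symm hab') hac'
    have hb : b ∈ sp.dom := by_contra fun hb => hout' b c hb hbc hbc'
    rw [Equiv.Perm.mul_apply, hcls a ⟨b, hb⟩ hab hab', hcls' ⟨b, hb⟩ c hbc hbc']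

lemma IsPermutationBlock.pow_succ {B : ℕ → Sin} {t : ℕ} {π : Equiv.Perm sp.Classes}
    (hB : IsPermutationBlock P σ sp B t π) (k : ℕ) :
    ∃ C, IsPermutationBlock P σ sp C ((k + 1) * t) (π ^ (k + 1)) := by
  induction k with
  | zero => exact ⟨B, by simpa using hB⟩
  | succ k ih =>
    obtain ⟨C, hC⟩ := ih
    refine ⟨blockAppend B t C, ?_⟩
    rw [_root_.pow_succ, add_mul, one_mul, add_comm]
    exact hB.append hC

lemma IsPermutationBlock.zero_length {B : ℕ → Sin} {π : Equiv.Perm sp.Classes}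
    (hB : IsPermutationBlock P σ sp B 0 π) : sp.dom = Set.univ ∧ π = 1 := by
  obtain ⟨-, -, -, -, hout, hcls⟩ := hB
  have hdiag (a : Sout) : BlockType P B 0 a a := ⟨fun _ => a, rfl, rfl, by omega⟩
  refine ⟨Set.eq_univ_of_forall fun a => by_contra fun ha =>
    hout a a ha (hdiag a) (sp.pp_equiv.refl a), Equiv.ext fun c => ?_⟩
  induction c using Quotient.ind with
  | _ a => exact hcls a a (hdiag a) (sp.pp_equiv.refl a)


lemma IsPermutationBlock.preceq {B : ℕ → Sin} {t : ℕ} {π : Equiv.Perm sp.Classes}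
    (hB : IsPermutationBlock P σ sp B t π) {a b : Sout} (hab : BlockType P B t a b) :
    sp.preceq a b :=
  hB.2.2.2.1 a b hab

lemma IsPermutationBlock.mem_dom {B : ℕ → Sin} {t : ℕ} {π : Equiv.Perm sp.Classes}
    (hB : IsPermutationBlock P σ sp B t π) {a b : Sout} (hab : BlockType P B t a b)
    (hba : sp.preceq b a) : a ∈ sp.dom :=
  by_contra fun ha => hB.2.2.2.2.1 a b ha hab (sp.preceq_antisymm (hB.preceq hab) hba)

lemma IsPermutationBlock.apply_cls {B : ℕ → Sin} {t : ℕ} {π : Equiv.Perm sp.Classes}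
    (hB : IsPermutationBlock P σ sp B t π) {a b : sp.dom} (hab : BlockType P B t a b)
    (hba : sp.preceq b a) : π (sp.cls a) = sp.cls b :=
  hB.2.2.2.2.2 a b hab (sp.preceq_antisymm (hB.preceq hab) hba)


variable (P σ sp) in
def HasPositiveBlock (π : Equiv.Perm sp.Classes) : Prop :=
  ∃ B t, IsPermutationBlock P σ sp B (t + 1) π

lemma HasPositiveBlock.mem_Gamma {π : Equiv.Perm sp.Classes} (h : HasPositiveBlock P σ sp π) :
    π ∈ Gamma P σ sp :=
  let ⟨B, t, hB⟩ := h; ⟨B, t + 1, hB⟩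

lemma HasPositiveBlock.mul {π π' : Equiv.Perm sp.Classes} (h : HasPositiveBlock P σ sp π)
    (h' : π' ∈ Gamma P σ sp) : HasPositiveBlock P σ sp (π' * π) := by
  obtain ⟨B, t, hB⟩ := h
  obtain ⟨B', t', hB'⟩ := h'
  exact ⟨_, t + t', by simpa [Nat.add_right_comm] using hB.append hB'⟩

lemma HasPositiveBlock.one [Finite Sout] {π : Equiv.Perm sp.Classes}
    (h : HasPositiveBlock P σ sp π) : HasPositiveBlock P σ sp 1 := by
  obtain ⟨B, t, hB⟩ := h
  obtain ⟨C, hC⟩ := hB.pow_succ (orderOf π - 1)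
  rw [Nat.sub_add_cancel (orderOf_pos π), pow_orderOf_eq_one] at hC
  exact ⟨C, orderOf π * (t + 1) - 1,
    by rwa [Nat.sub_add_cancel (Nat.mul_pos (orderOf_pos π) t.succ_pos)]⟩

lemma IsMixingAt.exists_hasPositiveBlock [Nonempty Sout] (hmix : IsMixingAt P σ sp) :
    ∃ π, HasPositiveBlock P σ sp π := by
  obtain ⟨⟨B, t, π, hB⟩, hnofix⟩ := hmix
  by_contra! hnone
  have hzero {B' t' π'} (hB' : IsPermutationBlock P σ sp B' t' π') : t' = 0 := by
    by_contra ht'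
    exact hnone π' ⟨B', t' - 1, by rwa [Nat.sub_add_cancel (Nat.pos_of_ne_zero ht')]⟩
  obtain ⟨hdom, -⟩ := (hzero hB ▸ hB).zero_length
  obtain ⟨a⟩ := ‹Nonempty Sout›
  refine hnofix ⟨sp.cls ⟨a, hdom ▸ Set.mem_univ a⟩, ?_⟩
  rintro π' ⟨B', t', hB'⟩
  obtain rfl := hzero hB'
  rw [hB'.zero_length.2, Equiv.Perm.one_apply]

lemma IsMixingAt.hasPositiveBlock_of_mem_closure [Finite Sout] [Nonempty Sout]
    (hmix : IsMixingAt P σ sp) {γ : Equiv.Perm sp.Classes}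
    (hγ : γ ∈ Subgroup.closure (Gamma P σ sp)) : HasPositiveBlock P σ sp γ := by
  obtain ⟨π, hπ⟩ := hmix.exists_hasPositiveBlock
  rw [← Subgroup.mem_toSubmonoid, Subgroup.closure_toSubmonoid_of_finite] at hγ
  induction hγ using Submonoid.closure_induction with
  | mem γ hγ => simpa using hπ.one.mul hγ
  | one => exact hπ.one
  | mul γ γ' _ _ hγ hγ' => exact hγ'.mul hγ.mem_Gamma

end PermutationBlocks

lemma aperiodic_iff_iterate {X : Type} (S : Equiv.Perm X) :
    Aperiodic S ↔ ∀ (m : ℕ) (x : X), S^[m] x = x → m = 0 := by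
  refine ⟨fun hS m x hx => ?_, fun hS n x hx => ?_⟩
  · exact_mod_cast hS m x (by rwa [zpow_natCast, ← Equiv.Perm.iterate_eq_pow])
  · obtain ⟨m, rfl | rfl⟩ := Int.eq_nat_or_neg n
    · exact_mod_cast hS m x (by rwa [Equiv.Perm.iterate_eq_pow, ← zpow_natCast])
    · have : (S ^ m) x = x := by
        conv_lhs => rw [← hx]
        rw [zpow_neg, zpow_natCast, ← Equiv.Perm.mul_apply, mul_inv_cancel, Equiv.Perm.one_apply]
      simpa using hS m x (by rwa [Equiv.Perm.iterate_eq_pow])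

section Tower

variable {Z : Type} (T : Equiv.Perm Z) (h : Z → ℕ)

/-- The Kakutani tower over `T`; the column over `z` has height `h z + 1`. -/
def tower : Set (Z × ℕ) := {q | q.2 ≤ h q.1}

def towerStep (q : Z × ℕ) : Z × ℕ :=
  if q.2 < h q.1 then (q.1, q.2 + 1) else (T q.1, 0)

def towerStepInv (q : Z × ℕ) : Z × ℕ :=
  if q.2 = 0 then (T.symm q.1, h (T.symm q.1)) else (q.1, q.2 - 1)

def towerMap : Equiv.Perm (tower h) where
  toFun x := ⟨towerStep T h x, by
    unfold towerStep; split_ifs with hx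
    exacts [hx, Nat.zero_le _]⟩
  invFun x := ⟨towerStepInv T h x, by
    have hx : x.1.2 ≤ h x.1.1 := x.2
    unfold towerStepInv; split_ifs
    · exact le_refl (h (T.symm x.1.1))
    · exact le_trans (Nat.sub_le _ 1) hx⟩
  left_inv := by
    rintro ⟨⟨z, j⟩, hj : j ≤ h z⟩
    apply Subtype.ext
    by_cases hjz : j < h z
    · simp [towerStep, towerStepInv, hjz]
    · simp [towerStep, towerStepInv, le_antisymm hj (not_lt.1 hjz)]
  right_inv := by
    rintro ⟨⟨z, j⟩, hj : j ≤ h z⟩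
    apply Subtype.ext
    rcases Nat.eq_zero_or_pos j with rfl | hj0
    · simp [towerStep, towerStepInv]
    · simp [towerStep, towerStepInv, hj0.ne', show j - 1 < h z by omega, Nat.sub_add_cancel hj0]

def towerLevel (j : ℕ) (z : Z) : tower h :=
  ⟨(z, min j (h z)), show min j (h z) ≤ h z from min_le_right _ _⟩

variable {T h}

lemma towerMap_coe (x : tower h) : (towerMap T h x).1 = towerStep T h x.1 := rfl

lemma towerLevel_of_le {j : ℕ} {z : Z} (hj : j ≤ h z) : (towerLevel h j z).1 = (z, j) := by
  simp [towerLevel, hj]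

lemma towerMap_towerLevel_of_lt {j : ℕ} {z : Z} (hj : j < h z) :
    towerMap T h (towerLevel h j z) = towerLevel h (j + 1) z :=
  Subtype.ext <| by simp [towerMap, towerStep, towerLevel, hj, hj.le, Nat.succ_le_of_lt hj]

lemma towerMap_towerLevel_top (z : Z) :
    towerMap T h (towerLevel h (h z) z) = towerLevel h 0 (T z) :=
  Subtype.ext <| by simp [towerMap, towerStep, towerLevel]

lemma towerMap_iterate (m : ℕ) (x : tower h) : ∃ r : ℕ, ((towerMap T h)^[m] x).1.1 = T^[r] x.1.1 ∧
    (r = 0 → ((towerMap T h)^[m] x).1.2 = x.1.2 + m) := by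
  induction m with
  | zero => exact ⟨0, rfl, fun _ => rfl⟩
  | succ m ih =>
    obtain ⟨r, hr, hr0⟩ := ih
    rw [Function.iterate_succ_apply', towerMap_coe, towerStep]
    split_ifs
    · exact ⟨r, hr, fun h0 => by simp [hr0 h0, Nat.add_assoc]⟩
    · exact ⟨r + 1, by simp [hr, Function.iterate_succ_apply'], fun h0 => absurd h0 r.succ_ne_zero⟩

lemma Aperiodic.towerMap (hT : Aperiodic T) : Aperiodic (towerMap T h) := by
  rw [aperiodic_iff_iterate] at hT ⊢
  intro m x hx
  obtain ⟨r, hr, hr0⟩ := towerMap_iterate (T := T) m x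
  rw [hx] at hr hr0
  have := hr0 (hT r _ hr.symm)
  omega

variable [MeasurableSpace Z]

lemma measurableSet_tower (hh : Measurable h) : MeasurableSet (tower h) :=
  measurableSet_le measurable_snd (hh.comp measurable_fst)

lemma measurable_towerMap (hT : Measurable T) (hh : Measurable h) :
    Measurable (towerMap T h) := by
  refine Measurable.subtype_mk (Measurable.comp (g := towerStep T h) ?_ measurable_subtype_coe)
  exact Measurable.ite (measurableSet_lt measurable_snd (hh.comp measurable_fst))
    (measurable_fst.prodMk (measurable_snd.add_const 1))
    ((hT.comp measurable_fst).prodMk measurable_const)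

lemma measurable_towerMap_symm (hT' : Measurable T.symm) (hh : Measurable h) :
    Measurable (towerMap T h).symm := by
  refine Measurable.subtype_mk (Measurable.comp (g := towerStepInv T h) ?_ measurable_subtype_coe)
  exact Measurable.ite (measurable_snd (measurableSet_singleton 0))
    ((hT'.comp measurable_fst).prodMk (hh.comp (hT'.comp measurable_fst)))
    (measurable_fst.prodMk (measurable_snd.sub_const 1))

lemma measurable_towerLevel (hh : Measurable h) (j : ℕ) : Measurable (towerLevel h j) :=
  (measurable_id.prodMk (measurable_const.min hh)).subtype_mk

variable (h) in
/-- Not `towerMap`-invariant: only its null sets matter, and they are detected level by level. -/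
noncomputable def towerMeasure (μ : Measure Z) : Measure (tower h) :=
  Measure.sum fun j => (2⁻¹ : ℝ≥0∞) ^ (j + 1) • μ.map (towerLevel h j)

lemma isProbabilityMeasure_towerMeasure (hh : Measurable h) (μ : Measure Z)
    [IsProbabilityMeasure μ] : IsProbabilityMeasure (towerMeasure h μ) := by
  constructor
  simp only [towerMeasure, Measure.sum_apply _ MeasurableSet.univ, Measure.smul_apply,
    Measure.map_apply (measurable_towerLevel hh _) MeasurableSet.univ, Set.preimage_univ,
    measure_univ, smul_eq_mul, mul_one, ENNReal.tsum_geometric_add_one, ENNReal.one_sub_inv_two,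
    inv_inv]
  exact ENNReal.inv_mul_cancel two_ne_zero ENNReal.ofNat_ne_top

lemma ae_towerLevel_of_ae_towerMeasure (hh : Measurable h) {μ : Measure Z}
    {p : tower h → Prop} (hp : ∀ᵐ x ∂towerMeasure h μ, p x) :
    ∀ᵐ z ∂μ, ∀ j, p (towerLevel h j z) := by
  rw [towerMeasure, Measure.ae_sum_iff] at hp
  refine ae_all_iff.2 fun j => ae_of_ae_map (measurable_towerLevel hh j).aemeasurable ?_
  exact (Measure.ae_ennreal_smul_measure_iff
    (ENNReal.pow_ne_zero (ENNReal.inv_ne_zero.2 ENNReal.ofNat_ne_top) _)).1 (hp j)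

lemma standardBorelSpace_tower [StandardBorelSpace Z] (hh : Measurable h) :
    StandardBorelSpace (tower h) :=
  (measurableSet_tower hh).standardBorel

lemma ae_blockType_of_ae_solution {Sin Sout : Type} {P : Sin → Sin → Sout → Sout → Prop}
    (hh : Measurable h) {μ : Measure Z} (word : Z → ℕ → Sin)
    (hword : ∀ z, word z (h z + 1) = word (T z) 0) (f : tower h → Sout)
    (hf : ∀ᵐ x ∂towerMeasure h μ, P (word x.1.1 x.1.2) (word (towerMap T h x).1.1
      (towerMap T h x).1.2) (f x) (f (towerMap T h x))) :
    ∀ᵐ z ∂μ, BlockType P (word z) (h z + 1) (f (towerLevel h 0 z)) (f (towerLevel h 0 (T z))) := by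
  filter_upwards [ae_towerLevel_of_ae_towerMeasure hh hf] with z hz
  refine ⟨fun j => if j ≤ h z then f (towerLevel h j z) else f (towerLevel h 0 (T z)),
    by simp, by simp, fun j hj => ?_⟩
  have hjz : j ≤ h z := Nat.lt_succ_iff.1 hj
  have := hz j
  rw [towerLevel_of_le hjz] at this
  rcases hjz.lt_or_eq with hlt | rfl
  · rw [towerMap_towerLevel_of_lt hlt, towerLevel_of_le hlt] at this
    simpa [hjz, Nat.succ_le_of_lt hlt] using this
  · rw [towerMap_towerLevel_top, towerLevel_of_le (Nat.zero_le _), ← hword] at this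
    simpa using this

end Tower

section Approximation

lemma exists_measurableSet_symmDiff_lt_of_iSup_eq {α : Type*} [mα : MeasurableSpace α]
    {μ : Measure α} [IsFiniteMeasure μ] {m : ℕ → MeasurableSpace α} (hm : Monotone m)
    (hsup : ⨆ n, m n = mα) {s : Set α} (hs : MeasurableSet s) {ε : ℝ≥0∞} (hε : 0 < ε) :
    ∃ n t, MeasurableSet[m n] t ∧ μ (t ∆ s) < ε := by
  have hC : IsSetRing {t | ∃ n, MeasurableSet[m n] t} :=
    { empty_mem := ⟨0, @MeasurableSet.empty _ (m 0)⟩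
      union_mem := fun _ _ ⟨i, hs⟩ ⟨j, ht⟩ => ⟨max i j,
        @MeasurableSet.union _ (m _) _ _ (hm (le_max_left i j) _ hs) (hm (le_max_right i j) _ ht)⟩
      sdiff_mem := fun _ _ ⟨i, hs⟩ ⟨j, ht⟩ => ⟨max i j,
        @MeasurableSet.diff _ (m _) _ _ (hm (le_max_left i j) _ hs) (hm (le_max_right i j) _ ht)⟩ }
  have hgen : mα = MeasurableSpace.generateFrom {t | ∃ n, MeasurableSet[m n] t} := by
    refine hsup ▸ le_antisymm ?_ (MeasurableSpace.generateFrom_le fun t ⟨n, ht⟩ => le_iSup m n t ht)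
    exact iSup_le fun n t ht => MeasurableSpace.measurableSet_generateFrom ⟨n, ht⟩
  obtain ⟨t, ⟨n, ht⟩, hlt⟩ := exists_measure_symmDiff_lt_of_generateFrom_isSetRing (μ := μ) hC
    ⟨{Set.univ}, Set.countable_singleton _,
      Set.singleton_subset_iff.2 ⟨0, @MeasurableSet.univ _ (m 0)⟩, by simp⟩
    hgen hs hε
  exact ⟨n, t, ht, hlt⟩

variable {Y G : Type*} [One G]

def window (N : ℕ) (z : Y × (ℤ → G)) : Y × (ℤ → G) :=
  (z.1, fun k => if k.natAbs ≤ N then z.2 k else 1)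

lemma window_window {N N' : ℕ} (h : N ≤ N') (z : Y × (ℤ → G)) :
    window N (window N' z) = window N z := by
  refine Prod.ext rfl (funext fun k => ?_)
  by_cases hk : k.natAbs ≤ N
  · simp [window, hk, hk.trans h]
  · simp [window, hk]

variable [MeasurableSpace Y] [MeasurableSpace G]

variable (Y G) in
abbrev windowMeasurableSpace (N : ℕ) : MeasurableSpace (Y × (ℤ → G)) :=
  MeasurableSpace.comap (window N) inferInstance

lemma measurable_window (N : ℕ) : Measurable (window (Y := Y) (G := G) N) := by
  refine measurable_fst.prodMk (measurable_pi_lambda _ fun k => ?_)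
  by_cases hk : k.natAbs ≤ N
  · simp only [hk, if_true]
    exact (measurable_pi_apply k).comp measurable_snd
  · simp only [hk, if_false]
    exact measurable_const

lemma monotone_windowMeasurableSpace : Monotone (windowMeasurableSpace Y G) := by
  intro N N' h s ⟨E, hE, hs⟩
  exact ⟨window N ⁻¹' E, measurable_window N hE, by
    rw [← hs, ← Set.preimage_comp]; congr 1; exact funext (window_window h)⟩

lemma iSup_windowMeasurableSpace :
    ⨆ N, windowMeasurableSpace Y G N = (inferInstance : MeasurableSpace (Y × (ℤ → G))) := by
  refine le_antisymm (iSup_le fun N => (measurable_window N).comap_le) ?_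
  have hwin (N : ℕ) : Measurable[⨆ N, windowMeasurableSpace Y G N] (window (Y := Y) (G := G) N) :=
    (comap_measurable _).mono (le_iSup (windowMeasurableSpace Y G) N) le_rfl
  have hid : Measurable[⨆ N, windowMeasurableSpace Y G N] fun z : Y × (ℤ → G) => (z.1, z.2) := by
    refine (measurable_fst.comp (hwin 0) :).prodMk
      (@measurable_pi_lambda _ _ _ (⨆ N, windowMeasurableSpace Y G N) _ _ fun k => ?_)
    have : (fun z : Y × (ℤ → G) => z.2 k) = (fun z => z.2 k) ∘ window k.natAbs := by
      funext z; simp [window]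
    exact this ▸ ((measurable_pi_apply k).comp measurable_snd).comp (hwin k.natAbs)
  exact fun s hs => hid hs

lemma mem_iff_of_window_eq {N : ℕ} {s : Set (Y × (ℤ → G))}
    (hs : MeasurableSet[windowMeasurableSpace Y G N] s) {z z' : Y × (ℤ → G)}
    (hzz' : window N z = window N z') : z ∈ s ↔ z' ∈ s := by
  obtain ⟨E, -, rfl⟩ := hs
  simp [hzz']

lemma exists_window_approx {μ : Measure (Y × (ℤ → G))} [IsFiniteMeasure μ] {K : Type*}
    [Finite K] [MeasurableSpace K] [MeasurableSingletonClass K] {ψ : Y × (ℤ → G) → K}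
    (hψ : Measurable ψ) {ε : ℝ≥0∞} (hε : 0 < ε) :
    ∃ N D, MeasurableSet D ∧ μ D < ε ∧
      ∀ z z', z ∉ D → z' ∉ D → window N z = window N z' → ψ z = ψ z' := by
  cases nonempty_fintype K
  obtain ⟨δ, hδ, hδε⟩ := ENNReal.exists_pos_sum_of_countable' hε.ne' K
  choose n t ht htψ using fun c =>
    exists_measurableSet_symmDiff_lt_of_iSup_eq (μ := μ) monotone_windowMeasurableSpace
      iSup_windowMeasurableSpace (hψ (measurableSet_singleton c)) (hδ c)
  set N := Finset.univ.sup n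
  have htN (c : K) := monotone_windowMeasurableSpace (Finset.le_sup (Finset.mem_univ c)) _ (ht c)
  refine ⟨N, ⋃ c, t c ∆ (ψ ⁻¹' {c}),
    MeasurableSet.iUnion fun c => ((measurable_window N).comap_le _ (htN c)).symmDiff
      (hψ (measurableSet_singleton c)),
    (measure_iUnion_le _).trans_lt ((ENNReal.tsum_le_tsum fun c => (htψ c).le).trans_lt hδε),
    fun z z' hz hz' hzz' => ?_⟩
  simp only [Set.mem_iUnion, Set.mem_symmDiff, Set.mem_preimage, Set.mem_singleton_iff,
    not_exists, not_or, not_and, not_not] at hz hz'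
  exact ((hz' (ψ z)).1 ((mem_iff_of_window_eq (htN (ψ z)) hzz').1 ((hz (ψ z)).2 rfl))).symm

end Approximation

lemma ae_rel_symm_of_measurePreserving {α β : Type*} [MeasurableSpace α] {μ : Measure α}
    [IsFiniteMeasure μ] {T : α → α} (hT : MeasurePreserving T μ μ) [MeasurableSpace β]
    [MeasurableSingletonClass β] [Countable β] {r : β → β → Prop} (hrefl : ∀ b, r b b)
    (htrans : ∀ {a b c}, r a b → r b c → r a c) {φ : α → β} (hφ : Measurable φ)
    (h : ∀ᵐ z ∂μ, r (φ z) (φ (T z))) :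
    ∀ᵐ z ∂μ, r (φ (T z)) (φ z) := by
  -- Each up-set `{z | r b (φ z)}` lies a.e. inside its preimage, which has the same measure.
  have hU (b : β) : MeasurableSet {z | r b (φ z)} :=
    hφ (Set.to_countable {b' | r b b'}).measurableSet
  have hinv (b : β) : {z | r b (φ z)} =ᵐ[μ] T ⁻¹' {z | r b (φ z)} :=
    ae_eq_of_ae_subset_of_measure_ge (h.mono fun z hz (hb : r b (φ z)) => htrans hb hz)
      (hT.measure_preimage (hU b).nullMeasurableSet).le (hU b).nullMeasurableSet
      (measure_ne_top _ _)
  filter_upwards [ae_all_iff.2 hinv] with z hz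
  have : r (φ (T z)) (φ z) = r (φ (T z)) (φ (T z)) := hz (φ (T z))
  exact this ▸ hrefl _

lemma exists_forall_mul_mem {M ι : Type*} [Group M] [MeasurableSpace M] [MeasurableMul M]
    {μ : Measure M} [IsProbabilityMeasure μ] [μ.IsMulLeftInvariant] [Fintype ι] (a : ι → M)
    {s : Set M} (hs : Fintype.card ι * μ sᶜ < 1) : ∃ z, ∀ i, a i * z ∈ s := by
  by_contra! hnone
  have : (1 : ℝ≥0∞) ≤ Fintype.card ι * μ sᶜ := calc
    1 = μ (⋃ i, (a i * ·) ⁻¹' sᶜ) := by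
      rw [Set.eq_univ_of_forall (s := ⋃ i, (a i * ·) ⁻¹' sᶜ) fun z => Set.mem_iUnion.2 (hnone z),
        measure_univ]
    _ ≤ ∑ i, μ ((a i * ·) ⁻¹' sᶜ) := measure_iUnion_fintype_le _ _
    _ = Fintype.card ι * μ sᶜ := by
      simp only [measure_preimage_mul, Finset.sum_const, Finset.card_univ, nsmul_eq_mul]
  exact (this.trans_lt hs).false

lemma measurePreserving_of_continuous_mulEquiv {M : Type*} [Group M] [TopologicalSpace M]
    [IsTopologicalGroup M] [LocallyCompactSpace M] [MeasurableSpace M] [BorelSpace M]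
    (μ : Measure M) [μ.IsHaarMeasure] [IsProbabilityMeasure μ] (e : M ≃* M) (he : Continuous e)
    (he' : Continuous e.symm) : MeasurePreserving e μ μ := by
  have := e.isHaarMeasure_map μ he he'
  have := Measure.isProbabilityMeasure_map (μ := μ) he.measurable.aemeasurable
  exact ⟨he.measurable, Measure.isHaarMeasure_eq_of_isProbabilityMeasure _ _⟩

section ShiftCocycle

variable {Y G : Type*} [Group Y]

def rotateShift (y₀ : Y) : Equiv.Perm (Y × (ℤ → G)) where
  toFun z := (y₀ * z.1, fun k => z.2 (k + 1))
  invFun z := (y₀⁻¹ * z.1, fun k => z.2 (k - 1))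
  left_inv z := by simp
  right_inv z := by simp

lemma rotateShift_iterate (y₀ : Y) (n : ℕ) (z : Y × (ℤ → G)) :
    (rotateShift y₀)^[n] z = (y₀ ^ n * z.1, fun k => z.2 (k + n)) := by
  induction n with
  | zero => simp
  | succ n ih =>
    rw [Function.iterate_succ_apply', ih]
    simp [rotateShift, _root_.pow_succ', mul_assoc, add_assoc, add_comm (1 : ℤ)]

variable [Group G]

/-- `wordProd w n = w (n - 1) * ⋯ * w 1 * w 0`. -/
def wordProd (w : ℤ → G) : ℕ → G
  | 0 => 1
  | n + 1 => w n * wordProd w n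

lemma wordProd_congr {w w' : ℤ → G} {n : ℕ} (h : ∀ j < n, w j = w' j) :
    wordProd w n = wordProd w' n := by
  induction n with
  | zero => rfl
  | succ n ih =>
    simp only [wordProd, h n n.lt_succ_self, ih fun j hj => h j (hj.trans n.lt_succ_self)]

lemma exists_wordProd_mulSingle_mul {k₀ n : ℕ} (hn : k₀ < n) (w : ℤ → G) :
    ∃ L R : G, ∀ g, wordProd (Pi.mulSingle (k₀ : ℤ) g * w) n = L * g * R := by
  induction n, hn using Nat.le_induction with
  | base =>
    refine ⟨1, w k₀ * wordProd w k₀, fun g => ?_⟩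
    have hbelow : ∀ j < k₀, (Pi.mulSingle (k₀ : ℤ) g * w : ℤ → G) j = w j := fun j hj => by
      simp [show (j : ℤ) ≠ k₀ by omega]
    simp [wordProd, wordProd_congr hbelow, mul_assoc]
  | succ n hn ih =>
    obtain ⟨L, R, hLR⟩ := ih
    refine ⟨w n * L, R, fun g => ?_⟩
    simp [wordProd, hLR, show (n : ℤ) ≠ k₀ by omega, mul_assoc]

lemma smul_eq_wordProd_of_cocycle {K : Type*} [MulAction G K] {y₀ : Y}
    {ψ : Y × (ℤ → G) → K} {z : Y × (ℤ → G)}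
    (h : ∀ k, ψ (rotateShift y₀ ((rotateShift y₀)^[k] z)) =
      ((rotateShift y₀)^[k] z).2 0 • ψ ((rotateShift y₀)^[k] z)) (n : ℕ) :
    ψ ((rotateShift y₀)^[n] z) = wordProd z.2 n • ψ z := by
  induction n with
  | zero => simp [wordProd]
  | succ n ih =>
    rw [Function.iterate_succ_apply', h, ih, wordProd, mul_smul, rotateShift_iterate]
    simp

lemma window_one_mulSingle_mul {N k₀ : ℕ} (hk₀ : N < k₀) (g : G) (z : Y × (ℤ → G)) :
    window N ((1, Pi.mulSingle (k₀ : ℤ) g) * z) = window N z := by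
  refine Prod.ext (one_mul _) (funext fun k => ?_)
  by_cases hk : k.natAbs ≤ N
  · simp [window, hk, Pi.mulSingle_apply, show k ≠ k₀ by omega]
  · simp [window, hk]

lemma window_iterate_one_mulSingle_mul {N k₀ n : ℕ} (hn : k₀ + N < n) (y₀ : Y) (g : G)
    (z : Y × (ℤ → G)) :
    window N ((rotateShift y₀)^[n] ((1, Pi.mulSingle (k₀ : ℤ) g) * z)) =
      window N ((rotateShift y₀)^[n] z) := by
  rw [rotateShift_iterate, rotateShift_iterate]
  refine Prod.ext (by simp [window]) (funext fun k => ?_)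
  by_cases hk : k.natAbs ≤ N
  · simp [window, hk, Pi.mulSingle_apply, show k + n ≠ k₀ by omega]
  · simp [window, hk]

variable [MeasurableSpace Y] [MeasurableSpace G] [MeasurableMul (Y × (ℤ → G))]

theorem exists_forall_smul_eq_of_ae_cocycle [Finite G] {K : Type*} [Finite K] [MeasurableSpace K]
    [MeasurableSingletonClass K] [MulAction G K] {μ : Measure (Y × (ℤ → G))}
    [IsProbabilityMeasure μ] [μ.IsMulLeftInvariant] {y₀ : Y}
    (hT : MeasurePreserving (rotateShift y₀) μ μ) {ψ : Y × (ℤ → G) → K} (hψ : Measurable ψ)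
    (hcoc : ∀ᵐ z ∂μ, ψ (rotateShift y₀ z) = z.2 0 • ψ z) :
    ∃ c : K, ∀ g : G, g • c = c := by
  set T := rotateShift (G := G) y₀
  cases nonempty_fintype G
  obtain ⟨N, D, hDm, hD, hψD⟩ := exists_window_approx (μ := μ) hψ
    (ε := 1 / (2 * Fintype.card G)) (by simp [ENNReal.mul_eq_top])
  set n := 2 * N + 2
  set k₀ := N + 1
  set coc := {z | ∀ k, ψ (T (T^[k] z)) = (T^[k] z).2 0 • ψ (T^[k] z)}
  have hcoc' : μ cocᶜ = 0 :=
    ae_iff.1 (ae_all_iff.2 fun k => (hT.iterate k).quasiMeasurePreserving.ae hcoc)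
  set good := coc ∩ Dᶜ ∩ T^[n] ⁻¹' Dᶜ
  have hbad : μ goodᶜ ≤ μ D + μ D := calc
    μ goodᶜ = μ (cocᶜ ∪ D ∪ T^[n] ⁻¹' D) := by simp only [good, Set.compl_inter, compl_compl,
      Set.preimage_compl]
    _ ≤ μ cocᶜ + μ D + μ (T^[n] ⁻¹' D) :=
      (measure_union_le _ _).trans (add_le_add_left (measure_union_le _ _) _)
    _ = μ D + μ D := by
      rw [hcoc', zero_add, (hT.iterate n).measure_preimage hDm.nullMeasurableSet]
  obtain ⟨z₀, hz₀⟩ := exists_forall_mul_mem (μ := μ)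
    (fun g : G => ((1, Pi.mulSingle (k₀ : ℤ) g) : Y × (ℤ → G))) (s := good) <| calc
      Fintype.card G * μ goodᶜ ≤ Fintype.card G * (μ D + μ D) := by gcongr
      _ = 2 * Fintype.card G * μ D := by ring
      _ < 1 := ENNReal.mul_lt_of_lt_div' hD
  have hz₀' : z₀ ∈ good := by simpa [Prod.mk_one_one] using hz₀ 1
  obtain ⟨L, R, hLR⟩ := exists_wordProd_mulSingle_mul (show k₀ < n by omega) z₀.2
  -- Changing the letter at `k₀`, strictly between the windows around `0` and `n`, changes
  -- neither `ψ z₀` nor `ψ (T^[n] z₀)`, but inserts an arbitrary `g` into the cocycle.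
  have key (g : G) : (L * g * R) • ψ z₀ = ψ (T^[n] z₀) := by
    have h := smul_eq_wordProd_of_cocycle (hz₀ g).1.1 n
    rw [show (((1, Pi.mulSingle (k₀ : ℤ) g) : Y × (ℤ → G)) * z₀).2 =
      Pi.mulSingle (k₀ : ℤ) g * z₀.2 from rfl, hLR,
      hψD _ _ (hz₀ g).1.2 hz₀'.1.2 (window_one_mulSingle_mul (by omega) g z₀),
      hψD _ _ (hz₀ g).2 hz₀'.2 (window_iterate_one_mulSingle_mul (by omega) y₀ g z₀)] at h
    exact h.symm
  refine ⟨R • ψ z₀, fun g => smul_left_cancel L ?_⟩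
  simpa [mul_smul] using (key g).trans (key 1).symm

end ShiftCocycle

lemma aperiodic_rotateShift {Y G : Type} [Group Y] {y₀ : Y} (hy₀ : ¬IsOfFinOrder y₀) :
    Aperiodic (rotateShift (G := G) y₀) := by
  refine (aperiodic_iff_iterate _).2 fun m z hz => by_contra fun hm => hy₀ ?_
  have : y₀ ^ m * z.1 = z.1 := by simpa [rotateShift_iterate] using congrArg Prod.fst hz
  exact isOfFinOrder_iff_pow_eq_one.2 ⟨m, Nat.pos_of_ne_zero hm, mul_eq_right.1 this⟩

lemma continuous_rotateShift_symm {Y G : Type*} [Group Y] [TopologicalSpace Y] [ContinuousMul Y]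
    [TopologicalSpace G] (y₀ : Y) : Continuous (rotateShift (G := G) y₀).symm :=
  (continuous_const.mul continuous_fst).prodMk
    (continuous_pi fun k => (continuous_apply (k - 1)).comp continuous_snd)

lemma measurePreserving_rotateShift {Y G : Type*} [Group Y] [Group G] [TopologicalSpace Y]
    [TopologicalSpace G] [IsTopologicalGroup Y] [IsTopologicalGroup G] [MeasurableSpace Y]
    [MeasurableSpace G] [BorelSpace (Y × (ℤ → G))] [LocallyCompactSpace (Y × (ℤ → G))]
    (μ : Measure (Y × (ℤ → G))) [μ.IsHaarMeasure] [IsProbabilityMeasure μ] (y₀ : Y) :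
    MeasurePreserving (rotateShift y₀) μ μ := by
  let shift : (ℤ → G) ≃* (ℤ → G) :=
    { toFun w k := w (k + 1)
      invFun w k := w (k - 1)
      left_inv w := by simp
      right_inv w := by simp
      map_mul' _ _ := rfl }
  have hshift := measurePreserving_of_continuous_mulEquiv μ ((MulEquiv.refl Y).prodCongr shift)
    (continuous_fst.prodMk (continuous_pi fun k => (continuous_apply (k + 1)).comp continuous_snd))
    (continuous_fst.prodMk (continuous_pi fun k => (continuous_apply (k - 1)).comp continuous_snd))
  have : ⇑(rotateShift (G := G) y₀) = (((y₀, 1) : Y × (ℤ → G)) * ·) ∘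
      ((MulEquiv.refl Y).prodCongr shift) := by
    funext z
    exact Prod.ext rfl (one_mul _).symm
  exact this ▸ (measurePreserving_mul_left μ _).comp hshift

section Counterexample

abbrev RotationFactor : Type := (m : ℕ) → Multiplicative (ZMod (m + 2))

instance (m : ℕ) : MeasurableSpace (Multiplicative (ZMod (m + 2))) := borel _

instance (m : ℕ) : BorelSpace (Multiplicative (ZMod (m + 2))) := ⟨rfl⟩

def rotationGen : RotationFactor := fun _ => Multiplicative.ofAdd 1

lemma not_isOfFinOrder_rotationGen : ¬IsOfFinOrder rotationGen := by
  rw [isOfFinOrder_iff_pow_eq_one]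
  rintro ⟨r, hr, hpow⟩
  have : ((r : ℕ) : ZMod (r + 2)) = 0 := by
    simpa [rotationGen, ← ofAdd_nsmul] using congrFun hpow r
  have := Nat.le_of_dvd hr ((ZMod.natCast_eq_zero_iff r (r + 2)).1 this)
  omega

variable {Sin Sout : Type} [Fintype Sout] (P : Sin → Sin → Sout → Sout → Prop) (σ : Sin)
  (sp : Subpartition Sout)

abbrev Alphabet := ↥(Subgroup.closure (Gamma P σ sp))

instance : TopologicalSpace (Alphabet P σ sp) := ⊥
instance : DiscreteTopology (Alphabet P σ sp) := ⟨rfl⟩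
instance : MeasurableSpace (Alphabet P σ sp) := borel _
instance : BorelSpace (Alphabet P σ sp) := ⟨rfl⟩
instance : IsTopologicalGroup (Alphabet P σ sp) where
  continuous_mul := continuous_of_discreteTopology
  continuous_inv := continuous_of_discreteTopology

variable {P σ sp}

lemma IsMixingAt.not_ae_blockType {Y : Type*} [Group Y] [MeasurableSpace Y]
    [MeasurableMul (Y × (ℤ → Alphabet P σ sp))] {μ : Measure (Y × (ℤ → Alphabet P σ sp))}
    [IsProbabilityMeasure μ] [μ.IsMulLeftInvariant] {y₀ : Y}
    (hT : MeasurePreserving (rotateShift y₀) μ μ) (hmix : IsMixingAt P σ sp)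
    {B : Alphabet P σ sp → ℕ → Sin} {t : Alphabet P σ sp → ℕ}
    (hB : ∀ a, IsPermutationBlock P σ sp (B a) (t a + 1) a) {φ : Y × (ℤ → Alphabet P σ sp) → Sout}
    (hφ : ∀ s, MeasurableSet (φ ⁻¹' {s})) :
    ¬ ∀ᵐ z ∂μ, BlockType P (B (z.2 0)) (t (z.2 0) + 1) (φ z) (φ (rotateShift y₀ z)) := by
  classical
  intro hblock
  let _ : MeasurableSpace Sout := ⊤
  have hback : ∀ᵐ z ∂μ, sp.preceq (φ (rotateShift y₀ z)) (φ z) :=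
    ae_rel_symm_of_measurePreserving hT sp.preceq_refl sp.preceq_trans
      (measurable_to_countable' hφ) (hblock.mono fun z hz => (hB (z.2 0)).preceq hz)
  have hdom : ∀ᵐ z ∂μ, φ z ∈ sp.dom :=
    (hblock.and hback).mono fun z hz => (hB (z.2 0)).mem_dom hz.1 hz.2
  obtain ⟨z₁, hz₁⟩ := hdom.exists
  -- The value off `dom ∇` only matters on a null set.
  let cls (a : Sout) : sp.Classes := if ha : a ∈ sp.dom then sp.cls ⟨a, ha⟩ else sp.cls ⟨φ z₁, hz₁⟩
  let _ : MeasurableSpace sp.Classes := ⊤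
  have hcoc : ∀ᵐ z ∂μ, cls (φ (rotateShift y₀ z)) = z.2 0 • cls (φ z) := by
    filter_upwards [hblock, hback, hdom, hT.quasiMeasurePreserving.ae hdom] with z h1 h2 h3 h4
    simp only [cls, dif_pos h3, dif_pos h4]
    exact ((hB (z.2 0)).apply_cls (a := ⟨_, h3⟩) (b := ⟨_, h4⟩) h1 h2).symm
  obtain ⟨c, hc⟩ := exists_forall_smul_eq_of_ae_cocycle (ψ := cls ∘ φ) hT
    (measurable_from_top.comp (measurable_to_countable' hφ)) hcoc
  exact hmix.2 ⟨c, fun π hπ => hc ⟨π, Subgroup.subset_closure hπ⟩⟩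

lemma IsMixingAt.exists_not_ae_solution [Nonempty Sout] (hmix : IsMixingAt P σ sp) :
    ∃ (X : Type) (_ : MeasurableSpace X), StandardBorelSpace X ∧
      ∃ S : Equiv.Perm X, Measurable S ∧ Measurable S.symm ∧ Aperiodic S ∧
        ∃ μ : Measure X, IsProbabilityMeasure μ ∧
          ∃ i : X → Sin, (∀ σ : Sin, MeasurableSet (i ⁻¹' {σ})) ∧
            ∀ f : X → Sout, (∀ τ : Sout, MeasurableSet (f ⁻¹' {τ})) →
              ¬ (∀ᵐ x ∂μ, P (i x) (i (S x)) (f x) (f (S x))) := by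
  choose B t hB using fun a : Alphabet P σ sp => hmix.hasPositiveBlock_of_mem_closure a.2
  let μ : Measure (RotationFactor × (ℤ → Alphabet P σ sp)) := Measure.haarMeasure ⊤
  have : IsProbabilityMeasure μ := ⟨Measure.haarMeasure_self (K₀ := ⊤)⟩
  let T := rotateShift (G := Alphabet P σ sp) rotationGen
  have hT : MeasurePreserving T μ μ := measurePreserving_rotateShift μ _
  let h : RotationFactor × (ℤ → Alphabet P σ sp) → ℕ := fun z => t (z.2 0)
  have hh : Measurable h :=
    (measurable_of_countable t).comp ((measurable_pi_apply 0).comp measurable_snd)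
  let word : RotationFactor × (ℤ → Alphabet P σ sp) → ℕ → Sin := fun z => B (z.2 0)
  have hword (z) : word z (h z + 1) = word (T z) 0 := (hB _).2.1.trans (hB _).1.symm
  have hletter : Measurable fun x : tower h => (x.1.1.2 0, x.1.2) :=
    ((measurable_pi_apply 0).comp (measurable_snd.comp (measurable_fst.comp
      measurable_subtype_coe))).prodMk (measurable_snd.comp measurable_subtype_coe)
  refine ⟨tower h, inferInstance, standardBorelSpace_tower hh, towerMap T h,
    measurable_towerMap hT.measurable hh,
    measurable_towerMap_symm (continuous_rotateShift_symm _).measurable hh,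
    (aperiodic_rotateShift not_isOfFinOrder_rotationGen).towerMap, towerMeasure h μ,
    isProbabilityMeasure_towerMeasure hh μ, fun x => word x.1.1 x.1.2,
    fun s => hletter <|
      (Set.to_countable ((fun p : Alphabet P σ sp × ℕ => B p.1 p.2) ⁻¹' {s})).measurableSet,
    fun f hf hsol => hmix.not_ae_blockType hT hB (fun s => measurable_towerLevel hh 0 (hf s))
      (ae_blockType_of_ae_solution hh word hword f hsol)⟩

end Counterexample

theorem mixing_implies_not_MEASURE_general {Sin Sout : Type}
    [Fintype Sout] [Nonempty Sout]
    (P : Sin → Sin → Sout → Sout → Prop)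
    (h : IsMixing P) :
    ∃ (X : Type) (_ : MeasurableSpace X), StandardBorelSpace X ∧
      ∃ S : Equiv.Perm X, Measurable S ∧ Measurable S.symm ∧ Aperiodic S ∧
        ∃ μ : Measure X, IsProbabilityMeasure μ ∧
          ∃ i : X → Sin, (∀ σ : Sin, MeasurableSet (i ⁻¹' {σ})) ∧
            ∀ f : X → Sout, (∀ τ : Sout, MeasurableSet (f ⁻¹' {τ})) →
              ¬ (∀ᵐ x ∂μ, P (i x) (i (S x)) (f x) (f (S x))) := by
  obtain ⟨σ, sp, hmix⟩ := h
  exact hmix.exists_not_ae_solution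

/-- If an LCL problem `Π = (Σin, Σout, P)` in normal form is mixing,
then `Π` is not in the class `MEASURE`: there is a standard Borel space `X`, an aperiodic
Borel automorphism `S` of `X`, a Borel probability measure `μ` and a Borel input labeling
`i` admitting no Borel map `f` solving `Π` `μ`-almost everywhere. -/
theorem mixing_implies_not_MEASURE {Sin Sout : Type}
    [Fintype Sin] [Fintype Sout] [Nonempty Sin] [Nonempty Sout]
    (P : Sin → Sin → Sout → Sout → Prop) [∀ a b c d, Decidable (P a b c d)]
    (h : IsMixing P) :
    ∃ (X : Type) (_ : MeasurableSpace X), StandardBorelSpace X ∧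
      ∃ S : Equiv.Perm X, Measurable S ∧ Measurable S.symm ∧ Aperiodic S ∧
        ∃ μ : Measure X, IsProbabilityMeasure μ ∧
          ∃ i : X → Sin, (∀ σ : Sin, MeasurableSet (i ⁻¹' {σ})) ∧
            ∀ f : X → Sout, (∀ τ : Sout, MeasurableSet (f ⁻¹' {τ})) →
              ¬ (∀ᵐ x ∂μ, P (i x) (i (S x)) (f x) (f (S x))) :=
  mixing_implies_not_MEASURE_general P h
end

section
/- Let Π = (Σ_in, Σ_out, P) be an LCL problem in normal form and 𝓘 : ℤ → Σ_in an input labeling. Then the equivalence relation ≈⁺ on ℤ × Σ_out has at most 2^{|Σ_out|} equivalence classes, and likewise the equivalence relation ≈⁻ has at most 2^{|Σ_out|} equivalence classes. -/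
/-!
Edges of `G_𝓘` go from level `i` to level `i + 1`, so a path from `u` to a vertex above level
`n ≥ u.1` passes through level `n`. Hence if `u` and `v` lie at levels `≤ n` and reach the same
vertices on level `n`, then `r_u` and `r_v` agree above level `n`, and they can only differ on the
finitely many vertices between `min u.1 v.1` and `n`. Pairwise `≈⁺`-inequivalent vertices
therefore reach pairwise distinct subsets of `Σout` on a common level, so there are at most
`2 ^ |Σout|` of them, and a maximal such family meets every class. Reflecting `ℤ` (and swapping
the arguments of `P`) exchanges `l` and `r`, which turns the bound for `≈⁺` into one for `≈⁻`.
-/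

section InputGraph

variable {Sin Sout : Type}

/-- The edge relation of the input graph `G_𝓘` on `ℤ × Σout`: there is an edge from
`(i, a)` to `(i + 1, b)` iff `P (𝓘 i) (𝓘 (i+1)) a b` holds. -/
def InputEdge (P : Sin → Sin → Sout → Sout → Prop) (I : ℤ → Sin)
    (u v : ℤ × Sout) : Prop :=
  v.1 = u.1 + 1 ∧ P (I u.1) (I v.1) u.2 v.2

/-- `r_u`: the set of vertices reachable from `u` by a directed path in `G_𝓘`. -/
def rset (P : Sin → Sin → Sout → Sout → Prop) (I : ℤ → Sin) (u : ℤ × Sout) :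
    Set (ℤ × Sout) :=
  {v | Relation.ReflTransGen (InputEdge P I) u v}

/-- `l_u`: the set of vertices from which `u` is reachable by a directed path in `G_𝓘`. -/
def lset (P : Sin → Sin → Sout → Sout → Prop) (I : ℤ → Sin) (u : ℤ × Sout) :
    Set (ℤ × Sout) :=
  {v | Relation.ReflTransGen (InputEdge P I) v u}

/-- `u ≈⁺ v` iff the symmetric difference `r_u Δ r_v` is finite. -/
def RPlus (P : Sin → Sin → Sout → Sout → Prop) (I : ℤ → Sin)
    (u v : ℤ × Sout) : Prop :=
  (symmDiff (rset P I u) (rset P I v)).Finite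

/-- `u ≈⁻ v` iff the symmetric difference `l_u Δ l_v` is finite. -/
def RMinus (P : Sin → Sin → Sout → Sout → Prop) (I : ℤ → Sin)
    (u v : ℤ × Sout) : Prop :=
  (symmDiff (lset P I u) (lset P I v)).Finite

/-- The equivalence relation `ℜ`, the intersection of `≈⁺` and `≈⁻`. -/
def RRel (P : Sin → Sin → Sout → Sout → Prop) (I : ℤ → Sin)
    (u v : ℤ × Sout) : Prop :=
  RPlus P I u v ∧ RMinus P I u v

end InputGraph


section Graded

variable {α : Type*} {r : α → α → Prop} {f : α → ℤ}

theorem level_le_of_reflTransGen (hr : ∀ a b, r a b → f b = f a + 1) {a b : α}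
    (h : Relation.ReflTransGen r a b) : f a ≤ f b := by
  induction h with
  | refl => exact le_rfl
  | tail _ hbc ih => have := hr _ _ hbc; omega

theorem exists_level_eq_of_reflTransGen (hr : ∀ a b, r a b → f b = f a + 1) {a c : α}
    {n : ℤ} (h : Relation.ReflTransGen r a c) (ha : f a ≤ n) (hc : n ≤ f c) :
    ∃ b, f b = n ∧ Relation.ReflTransGen r a b ∧ Relation.ReflTransGen r b c := by
  induction h using Relation.ReflTransGen.head_induction_on with
  | refl => exact ⟨c, le_antisymm ha hc, .refl, .refl⟩
  | head hab hbc ih =>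
    rename_i a b
    rcases ha.eq_or_lt with ha | ha
    · exact ⟨a, ha, .refl, hbc.head hab⟩
    · obtain ⟨d, hd, had, hdc⟩ := ih (by have := hr _ _ hab; omega)
      exact ⟨d, hd, had.head hab, hdc⟩

end Graded

theorem reflTransGen_equiv_iff {α β : Type*} {r : α → α → Prop} {s : β → β → Prop} (e : α ≃ β)
    (h : ∀ a b, s (e a) (e b) ↔ r a b) {a b : α} :
    Relation.ReflTransGen s (e a) (e b) ↔ Relation.ReflTransGen r a b := by
  refine ⟨fun hab => ?_, fun hab => hab.lift e fun x y hxy => (h x y).2 hxy⟩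
  simpa [Function.onFun] using hab.lift e.symm fun x y hxy => (h _ _).1 (by simpa using hxy)

theorem exists_finset_card_le_forall_exists_rel {α : Type*} (r : α → α → Prop)
    [Std.Refl r] [Std.Symm r] {N : ℕ}
    (hN : ∀ T : Finset α, (T : Set α).Pairwise (fun a b => ¬ r a b) → T.card ≤ N) :
    ∃ T : Finset α, T.card ≤ N ∧ ∀ a, ∃ b ∈ T, r a b := by
  classical
  let Indep (m : ℕ) : Prop :=
    ∃ T : Finset α, (T : Set α).Pairwise (fun a b => ¬ r a b) ∧ T.card = m
  obtain ⟨T, hT, hcard⟩ : Indep (Nat.findGreatest Indep N) :=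
    Nat.findGreatest_spec (Nat.zero_le N) ⟨∅, by simp, rfl⟩
  refine ⟨T, hN T hT, fun a => ?_⟩
  by_contra! ha
  have haT : a ∉ T := fun h => ha a h (refl_of r a)
  have hins : ((insert a T : Finset α) : Set α).Pairwise (fun a b => ¬ r a b) := by
    rw [Finset.coe_insert, Set.pairwise_insert]
    exact ⟨hT, fun b hb _ => ⟨ha b hb, fun h => ha b hb (symm_of r h)⟩⟩
  have := Nat.le_findGreatest (P := Indep) (hN _ hins) ⟨_, hins, rfl⟩
  rw [Finset.card_insert_of_notMem haT] at this
  omega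

section InputGraphLemmas

variable {Sin Sout : Type} {P : Sin → Sin → Sout → Sout → Prop} {I : ℤ → Sin}

theorem level_le_of_mem_rset {u w : ℤ × Sout} (h : w ∈ rset P I u) : u.1 ≤ w.1 :=
  level_le_of_reflTransGen (fun _ _ e => e.1) h

theorem mem_rset_iff_exists_level {u w : ℤ × Sout} {n : ℤ} (hu : u.1 ≤ n) (hw : n ≤ w.1) :
    w ∈ rset P I u ↔ ∃ s, (n, s) ∈ rset P I u ∧ w ∈ rset P I (n, s) := by
  refine ⟨fun h => ?_, fun ⟨s, hus, hsw⟩ => Relation.ReflTransGen.trans hus hsw⟩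
  obtain ⟨v, rfl, huv, hvw⟩ := exists_level_eq_of_reflTransGen (fun _ _ e => e.1) h hu hw
  exact ⟨v.2, huv, hvw⟩

theorem rPlus_of_forall_mem_rset_iff [Finite Sout] {u v : ℤ × Sout} {n : ℤ}
    (hu : u.1 ≤ n) (hv : v.1 ≤ n) (h : ∀ s, (n, s) ∈ rset P I u ↔ (n, s) ∈ rset P I v) :
    RPlus P I u v := by
  have above : ∀ w : ℤ × Sout, n ≤ w.1 → (w ∈ rset P I u ↔ w ∈ rset P I v) := by
    intro w hw
    simp only [mem_rset_iff_exists_level hu hw, mem_rset_iff_exists_level hv hw, h]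
  refine ((Set.finite_Ico (min u.1 v.1) n).prod Set.finite_univ).subset fun w hw => ?_
  have hlt : w.1 < n := by
    by_contra! hn
    rw [Set.mem_symmDiff, above w hn] at hw
    tauto
  have hge : min u.1 v.1 ≤ w.1 := by
    rcases Set.mem_symmDiff.1 hw with ⟨hwu, -⟩ | ⟨hwv, -⟩
    · exact (min_le_left _ _).trans (level_le_of_mem_rset hwu)
    · exact (min_le_right _ _).trans (level_le_of_mem_rset hwv)
  exact ⟨⟨hge, hlt⟩, trivial⟩

instance : Std.Refl (RPlus P I) := ⟨fun u => by simp [RPlus]⟩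

instance : Std.Symm (RPlus P I) := ⟨fun u v h => by rwa [RPlus, symmDiff_comm]⟩

theorem card_le_of_pairwise_not_rPlus [Fintype Sout] (T : Finset (ℤ × Sout))
    (hT : (T : Set (ℤ × Sout)).Pairwise (fun u v => ¬ RPlus P I u v)) :
    T.card ≤ 2 ^ Fintype.card Sout := by
  classical
  obtain ⟨n, hn⟩ := (T.image Prod.fst).bddAbove
  have hlevel : ∀ u ∈ T, u.1 ≤ n := fun u hu => hn (Finset.mem_image_of_mem _ hu)
  let trace (u : ℤ × Sout) : Set Sout := {s | (n, s) ∈ rset P I u}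
  have hinj : Set.InjOn trace T := fun u hu v hv huv => by
    by_contra hne
    exact hT hu hv hne <| rPlus_of_forall_mem_rset_iff (hlevel u hu) (hlevel v hv)
      fun s => Set.ext_iff.1 huv s
  calc T.card ≤ (Finset.univ : Finset (Set Sout)).card :=
        Finset.card_le_card_of_injOn trace (fun _ _ => Finset.mem_univ _) hinj
    _ = 2 ^ Fintype.card Sout := by rw [Finset.card_univ, Fintype.card_set]

theorem exists_finset_forall_exists_rPlus [Fintype Sout] (P : Sin → Sin → Sout → Sout → Prop)
    (I : ℤ → Sin) :
    ∃ T : Finset (ℤ × Sout), T.card ≤ 2 ^ Fintype.card Sout ∧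
      ∀ u : ℤ × Sout, ∃ v ∈ T, RPlus P I u v :=
  exists_finset_card_le_forall_exists_rel _ card_le_of_pairwise_not_rPlus

def reflect : ℤ × Sout ≃ ℤ × Sout := (Equiv.neg ℤ).prodCongr (Equiv.refl Sout)

@[simp]
theorem reflect_apply (u : ℤ × Sout) : reflect u = (-u.1, u.2) := rfl

@[simp]
theorem reflect_reflect (u : ℤ × Sout) : reflect (reflect u) = u := by simp

theorem reflTransGen_reflect_iff {u v : ℤ × Sout} :
    Relation.ReflTransGen (InputEdge (fun a b c d => P b a d c) (I ∘ Neg.neg))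
      (reflect u) (reflect v) ↔ Relation.ReflTransGen (InputEdge P I) v u := by
  rw [reflTransGen_equiv_iff (r := Function.swap (InputEdge P I)), Relation.reflTransGen_swap]
  intro a b
  simp only [InputEdge, reflect_apply, Function.comp_apply, neg_neg, Function.swap]
  exact and_congr (by omega) Iff.rfl

theorem rMinus_of_rPlus_reflect {u v : ℤ × Sout}
    (h : RPlus (fun a b c d => P b a d c) (I ∘ Neg.neg) (reflect u) (reflect v)) :
    RMinus P I u v := by
  have hpre : ∀ w, lset P I w =
      reflect ⁻¹' rset (fun a b c d => P b a d c) (I ∘ Neg.neg) (reflect w) := fun w => by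
    ext x
    exact reflTransGen_reflect_iff.symm
  rw [RMinus, hpre, hpre, ← Set.preimage_symmDiff]
  exact h.preimage reflect.injective.injOn

end InputGraphLemmas

theorem card_classes_RPlus_RMinus_le_general {Sin Sout : Type}
    [Fintype Sout]
    (P : Sin → Sin → Sout → Sout → Prop)
    (I : ℤ → Sin) :
    (∃ T : Finset (ℤ × Sout), T.card ≤ 2 ^ Fintype.card Sout ∧
      ∀ u : ℤ × Sout, ∃ v ∈ T, RPlus P I u v) ∧
    (∃ T : Finset (ℤ × Sout), T.card ≤ 2 ^ Fintype.card Sout ∧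
      ∀ u : ℤ × Sout, ∃ v ∈ T, RMinus P I u v) := by
  refine ⟨exists_finset_forall_exists_rPlus P I, ?_⟩
  obtain ⟨T, hcard, hT⟩ :=
    exists_finset_forall_exists_rPlus (fun a b c d => P b a d c) (I ∘ Neg.neg)
  refine ⟨T.map reflect.toEmbedding, (Finset.card_map _).trans_le hcard, fun u => ?_⟩
  obtain ⟨v, hv, huv⟩ := hT (reflect u)
  refine ⟨reflect v, Finset.mem_map_of_mem _ hv, rMinus_of_rPlus_reflect ?_⟩
  rwa [reflect_reflect]

/-- For any LCL problem `Π = (Σin, Σout, P)` in normal form and any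
input labeling `𝓘 : ℤ → Σin`, the equivalence relations `≈⁺` and `≈⁻` on `ℤ × Σout`
each have at most `2 ^ |Σout|` equivalence classes (there is a set of at most
`2 ^ |Σout|` vertices meeting every class). -/
theorem card_classes_RPlus_RMinus_le {Sin Sout : Type}
    [Fintype Sin] [Fintype Sout] [Nonempty Sin] [Nonempty Sout]
    (P : Sin → Sin → Sout → Sout → Prop) [∀ a b c d, Decidable (P a b c d)]
    (I : ℤ → Sin) :
    (∃ T : Finset (ℤ × Sout), T.card ≤ 2 ^ Fintype.card Sout ∧
      ∀ u : ℤ × Sout, ∃ v ∈ T, RPlus P I u v) ∧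
    (∃ T : Finset (ℤ × Sout), T.card ≤ 2 ^ Fintype.card Sout ∧
      ∀ u : ℤ × Sout, ∃ v ∈ T, RMinus P I u v) :=
  card_classes_RPlus_RMinus_le_general P I
end

section
/- Let Π = (Σ_in, Σ_out, P) be an LCL problem in normal form, 𝓘 : ℤ → Σ_in an input labeling, and P an equivalence class of ℜ on the input graph G_𝓘. Assume that P meets slices arbitrarily far in both directions (for every k ∈ ℕ there are (j,b) ∈ P with j ≤ −k and (j',b') ∈ P with j' ≥ k). If P contains an infinite directed path (going to +∞ or to −∞), then P contains a doubly infinite directed path of G_𝓘. -/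
/-
Say that a vertex of the class `C` reaches both ways if it reaches vertices of `C` at arbitrarily
high levels and is reached from vertices of `C` at arbitrarily low levels. The class is convex
along paths: if `a ⇝ x ⇝ b` with `a, b ∈ C`, then `r_b ⊆ r_x ⊆ r_a` and `l_a ⊆ l_x ⊆ l_b`, so
`x ∈ C`. Since slices are finite, pigeonhole gives every vertex reaching both ways a successor and
a predecessor that also reach both ways, and following these yields the doubly infinite path.

Such a vertex exists: if `p` is an infinite path in `C` going up, every `v ∈ C` reaches `p`
(as `r_v Δ r_{p 0}` is finite), so the vertices of `C` far below pass through the slice of `p 0`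
on their way to `p`, and some vertex of that finite slice is passed for arbitrarily low starting
points. A path going down is the same situation in the reversed graph with negated levels.
-/

open Relation Function Filter
open scoped symmDiff

lemma Set.Finite.symmDiff_of_sandwich {α : Type*} {s a b x : Set α} (ha : (s ∆ a).Finite)
    (hb : (s ∆ b).Finite) (hbx : b ⊆ x) (hxa : x ⊆ a) : (s ∆ x).Finite :=
  (ha.union hb).subset fun y hy => by
    rcases hy with ⟨hs, hx⟩ | ⟨hx, hs⟩
    · exact Or.inr (Or.inl ⟨hs, fun h => hx (hbx h)⟩)
    · exact Or.inl (Or.inr ⟨hxa hx, hs⟩)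

lemma exists_mem_of_finite_symmDiff {α : Type*} {s a b : Set α} (ha : (s ∆ a).Finite)
    (hb : (s ∆ b).Finite) {p : ℕ → α} (hp : Injective p) (hpb : ∀ n, p n ∈ b) :
    ∃ n, p n ∈ a := by
  by_contra! hpa
  refine Set.infinite_range_of_injective hp ((ha.union hb).subset ?_)
  rintro _ ⟨n, rfl⟩
  by_cases hs : p n ∈ s
  · exact Or.inl (Or.inl ⟨hs, hpa n⟩)
  · exact Or.inr (Or.inr ⟨hpb n, hs⟩)

lemma finite_setOf_fst_eq {α β : Type*} [Finite β] (a : α) : {v : α × β | v.1 = a}.Finite :=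
  (Set.finite_range (Prod.mk a)).subset fun v hv => ⟨v.2, Prod.ext hv.symm rfl⟩

section LayeredGraph

variable {V : Type*} {E : V → V → Prop} {ℓ : V → ℤ} {C : Set V}

lemma exists_reflTransGen_level_eq (hℓ : ∀ ⦃u v⦄, E u v → ℓ v = ℓ u + 1) {u v : V}
    (h : ReflTransGen E u v) {i : ℤ} (hu : ℓ u ≤ i) (hv : i ≤ ℓ v) :
    ∃ x, ℓ x = i ∧ ReflTransGen E u x ∧ ReflTransGen E x v := by
  induction h with
  | refl => exact ⟨u, by omega, .refl, .refl⟩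
  | @tail b c hub e ih =>
    obtain hib | hbi := le_or_gt i (ℓ b)
    · obtain ⟨x, hx, hux, hxb⟩ := ih hib
      exact ⟨x, hx, hux, hxb.tail e⟩
    · exact ⟨c, by have := hℓ e; omega, hub.tail e, .refl⟩

lemma level_succ_flip (hℓ : ∀ ⦃u v⦄, E u v → ℓ v = ℓ u + 1) :
    ∀ ⦃u v⦄, flip E u v → (-ℓ) v = (-ℓ) u + 1 := fun _ _ h => by
  have := hℓ h
  simp only [Pi.neg_apply]
  omega

lemma finite_level_neg (hfin : ∀ i, {v | ℓ v = i}.Finite) (i : ℤ) : {v | (-ℓ) v = i}.Finite := by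
  simpa only [Pi.neg_apply, neg_eq_iff_eq_neg] using hfin (-i)

lemma level_of_path (hℓ : ∀ ⦃u v⦄, E u v → ℓ v = ℓ u + 1) {p : ℕ → V}
    (hp : ∀ n, E (p n) (p (n + 1))) (n : ℕ) : ℓ (p n) = ℓ (p 0) + n := by
  induction n with
  | zero => simp
  | succ n ih => rw [hℓ (hp n), ih]; push_cast; ring

lemma injective_of_path (hℓ : ∀ ⦃u v⦄, E u v → ℓ v = ℓ u + 1) {p : ℕ → V}
    (hp : ∀ n, E (p n) (p (n + 1))) : Injective p := fun m n h => by
  have hm := level_of_path hℓ hp m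
  rw [h, level_of_path hℓ hp n] at hm
  omega

lemma reflTransGen_of_path {p : ℕ → V} (hp : ∀ n, E (p n) (p (n + 1))) {m n : ℕ} (h : m ≤ n) :
    ReflTransGen E (p m) (p n) :=
  (reflTransGen_of_succ_of_le _ (fun i _ => hp i) h).lift p fun _ _ => id

def PathConvex (E : V → V → Prop) (C : Set V) : Prop :=
  ∀ ⦃a x b⦄, a ∈ C → b ∈ C → ReflTransGen E a x → ReflTransGen E x b → x ∈ C

lemma PathConvex.flip (hC : PathConvex E C) : PathConvex (flip E) C :=
  fun _ _ _ ha hb hax hxb => hC hb ha (reflTransGen_swap.1 hxb) (reflTransGen_swap.1 hax)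

def ReachesUp (E : V → V → Prop) (ℓ : V → ℤ) (C : Set V) (w : V) : Prop :=
  ∀ m : ℤ, ∃ v ∈ C, m ≤ ℓ v ∧ ReflTransGen E w v

lemma ReachesUp.of_reflTransGen {x y : V} (hy : ReachesUp E ℓ C y) (h : ReflTransGen E x y) :
    ReachesUp E ℓ C x :=
  fun m => (hy m).imp fun _ ⟨hv, hm, hyv⟩ => ⟨hv, hm, h.trans hyv⟩

lemma exists_mem_reachesUp_of_finite {S : Set V} (hS : S.Finite)
    (h : ∀ m : ℤ, ∃ x ∈ S, ∃ v ∈ C, m ≤ ℓ v ∧ ReflTransGen E x v) :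
    ∃ x ∈ S, ReachesUp E ℓ C x := by
  by_contra! hS'
  have : ∀ᶠ m in atTop, ∀ x ∈ S, ¬∃ v ∈ C, m ≤ ℓ v ∧ ReflTransGen E x v :=
    (eventually_all_finite hS).2 fun x hx => by
      obtain ⟨m, hm⟩ := not_forall.1 (hS' x hx)
      exact eventually_atTop.2 ⟨m, fun m' hm' ⟨v, hv, hle, hxv⟩ => hm ⟨v, hv, hm'.trans hle, hxv⟩⟩
  obtain ⟨m, hm⟩ := this.exists
  obtain ⟨x, hx, hxm⟩ := h m
  exact hm x hx hxm

lemma ReachesUp.exists_succ (hℓ : ∀ ⦃u v⦄, E u v → ℓ v = ℓ u + 1)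
    (hfin : ∀ i, {v | ℓ v = i}.Finite) (hC : PathConvex E C) {w : V} (hw : w ∈ C)
    (hup : ReachesUp E ℓ C w) : ∃ y, E w y ∧ y ∈ C ∧ ReachesUp E ℓ C y := by
  have hS : {y | E w y ∧ y ∈ C}.Finite := (hfin (ℓ w + 1)).subset fun y hy => hℓ hy.1
  obtain ⟨y, ⟨hwy, hyC⟩, hyup⟩ := exists_mem_reachesUp_of_finite hS fun m => by
    obtain ⟨v, hv, hmv, hwv⟩ := hup (max m (ℓ w + 1))
    obtain rfl | ⟨y, hwy, hyv⟩ := hwv.cases_head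
    · omega
    · exact ⟨y, ⟨hwy, hC hw hv (.single hwy) hyv⟩, v, hv, le_of_max_le_left hmv, hyv⟩
  exact ⟨y, hwy, hyC, hyup⟩

-- The downward condition is the upward one in the reversed graph with negated levels, so that
-- facts about predecessors follow from facts about successors.
def ReachesBothWays (E : V → V → Prop) (ℓ : V → ℤ) (C : Set V) (w : V) : Prop :=
  w ∈ C ∧ ReachesUp E ℓ C w ∧ ReachesUp (flip E) (-ℓ) C w

lemma reachesBothWays_flip {w : V} :
    ReachesBothWays (flip E) (-ℓ) C w ↔ ReachesBothWays E ℓ C w := by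
  simp only [ReachesBothWays, neg_neg]
  exact ⟨fun ⟨hw, hup, hdown⟩ => ⟨hw, hdown, hup⟩, fun ⟨hw, hup, hdown⟩ => ⟨hw, hdown, hup⟩⟩

lemma ReachesBothWays.exists_succ (hℓ : ∀ ⦃u v⦄, E u v → ℓ v = ℓ u + 1)
    (hfin : ∀ i, {v | ℓ v = i}.Finite) (hC : PathConvex E C) {w : V}
    (hw : ReachesBothWays E ℓ C w) : ∃ y, E w y ∧ ReachesBothWays E ℓ C y := by
  obtain ⟨hwC, hup, hdown⟩ := hw
  obtain ⟨y, hwy, hyC, hyup⟩ := hup.exists_succ hℓ hfin hC hwC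
  exact ⟨y, hwy, hyC, hyup, hdown.of_reflTransGen (.single hwy)⟩

lemma ReachesBothWays.exists_pred (hℓ : ∀ ⦃u v⦄, E u v → ℓ v = ℓ u + 1)
    (hfin : ∀ i, {v | ℓ v = i}.Finite) (hC : PathConvex E C) {w : V}
    (hw : ReachesBothWays E ℓ C w) : ∃ x, E x w ∧ ReachesBothWays E ℓ C x := by
  obtain ⟨x, hwx, hx⟩ := (reachesBothWays_flip.2 hw).exists_succ (level_succ_flip hℓ)
    (finite_level_neg hfin) hC.flip
  exact ⟨x, hwx, reachesBothWays_flip.1 hx⟩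

lemma exists_reachesBothWays_of_path (hℓ : ∀ ⦃u v⦄, E u v → ℓ v = ℓ u + 1)
    (hfin : ∀ i, {v | ℓ v = i}.Finite) (hC : PathConvex E C) (hlow : ∀ m, ∃ v ∈ C, ℓ v ≤ m)
    {p : ℕ → V} (hp : ∀ n, E (p n) (p (n + 1))) (hpC : ∀ n, p n ∈ C)
    (hcofinal : ∀ v ∈ C, ∃ n, ReflTransGen E v (p n)) : ∃ w, ReachesBothWays E ℓ C w := by
  have hpup (n : ℕ) : ReachesUp E ℓ C (p n) := fun m =>
    ⟨p (n + (m - ℓ (p n)).toNat), hpC _,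
      by rw [level_of_path hℓ hp, level_of_path hℓ hp n]; omega, reflTransGen_of_path hp (by omega)⟩
  have hS : {x | ℓ x = ℓ (p 0) ∧ x ∈ C ∧ ReachesUp E ℓ C x}.Finite :=
    (hfin (ℓ (p 0))).subset fun x hx => hx.1
  obtain ⟨w, ⟨-, hwC, hwup⟩, hwdown⟩ :=
    exists_mem_reachesUp_of_finite (E := flip E) (ℓ := -ℓ) hS fun m => by
      obtain ⟨v, hv, hvm⟩ := hlow (min (-m) (ℓ (p 0)))
      obtain ⟨n, hvp⟩ := hcofinal v hv
      obtain ⟨x, hx, hvx, hxp⟩ := exists_reflTransGen_level_eq hℓ hvp (i := ℓ (p 0))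
        (by omega) (by rw [level_of_path hℓ hp n]; omega)
      refine ⟨x, ⟨hx, hC hv (hpC n) hvx hxp, (hpup n).of_reflTransGen hxp⟩, v, hv, ?_,
        reflTransGen_swap.2 hvx⟩
      simp only [Pi.neg_apply]
      omega
  exact ⟨w, hwC, hwup, hwdown⟩

lemma exists_nat_path {G : V → Prop} (hsucc : ∀ w, G w → ∃ y, E w y ∧ G y) {w : V} (hw : G w) :
    ∃ p : ℕ → V, p 0 = w ∧ (∀ n, G (p n)) ∧ ∀ n, E (p n) (p (n + 1)) := by
  choose f hf using fun x : {x // G x} => hsucc x x.2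
  let next : {x // G x} → {x // G x} := fun x => ⟨f x, (hf x).2⟩
  refine ⟨fun n => (next^[n] ⟨w, hw⟩).1, rfl, fun n => (next^[n] _).2, fun n => ?_⟩
  dsimp only
  rw [iterate_succ_apply']
  exact (hf _).1

lemma exists_int_path {G : V → Prop} (hsucc : ∀ w, G w → ∃ y, E w y ∧ G y)
    (hpred : ∀ w, G w → ∃ x, E x w ∧ G x) {w : V} (hw : G w) :
    ∃ q : ℤ → V, (∀ n, G (q n)) ∧ ∀ n, E (q n) (q (n + 1)) := by
  obtain ⟨p, hp0, hpG, hp⟩ := exists_nat_path hsucc hw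
  obtain ⟨b, hb0, hbG, hb⟩ := exists_nat_path (E := flip E) hpred hw
  refine ⟨fun | .ofNat n => p n | .negSucc n => b (n + 1),
    fun | .ofNat n => hpG n | .negSucc n => hbG (n + 1), ?_⟩
  rintro (n | _ | n)
  · exact hp n
  · show E (b 1) (p 0)
    rw [hp0, ← hb0]
    exact hb 0
  · exact hb (n + 1)

end LayeredGraph

section RRelClass

variable {Sin Sout : Type} {P : Sin → Sin → Sout → Sout → Prop} {I : ℤ → Sin}

lemma inputEdge_level_succ : ∀ ⦃u v : ℤ × Sout⦄, InputEdge P I u v → v.1 = u.1 + 1 :=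
  fun _ _ h => h.1

lemma pathConvex_setOf_rRel (u₀ : ℤ × Sout) : PathConvex (InputEdge P I) {v | RRel P I u₀ v} :=
  fun _ _ _ ha hb hax hxb =>
    ⟨ha.1.symmDiff_of_sandwich hb.1 (fun _ hy => hxb.trans hy) (fun _ hy => hax.trans hy),
      hb.2.symmDiff_of_sandwich ha.2 (fun _ hy => hy.trans hax) (fun _ hy => hy.trans hxb)⟩

lemma RRel.exists_reflTransGen_to_path {u₀ v : ℤ × Sout} (hv : RRel P I u₀ v)
    {p : ℕ → ℤ × Sout} (hp0 : RRel P I u₀ (p 0)) (hp : ∀ n, InputEdge P I (p n) (p (n + 1))) :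
    ∃ n, ReflTransGen (InputEdge P I) v (p n) :=
  exists_mem_of_finite_symmDiff hv.1 hp0.1 (injective_of_path inputEdge_level_succ hp)
    fun n => reflTransGen_of_path hp (Nat.zero_le n)

lemma RRel.exists_reflTransGen_from_path {u₀ v : ℤ × Sout} (hv : RRel P I u₀ v)
    {p : ℕ → ℤ × Sout} (hp0 : RRel P I u₀ (p 0)) (hp : ∀ n, InputEdge P I (p (n + 1)) (p n)) :
    ∃ n, ReflTransGen (InputEdge P I) (p n) v :=
  exists_mem_of_finite_symmDiff hv.2 hp0.2
    (injective_of_path (level_succ_flip inputEdge_level_succ) (E := flip _) hp)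
    fun n => reflTransGen_swap.1 <|
      reflTransGen_of_path (E := flip (InputEdge P I)) hp (Nat.zero_le n)

end RRelClass

theorem class_with_infinite_path_has_doubly_infinite_path_general {Sin Sout : Type}
    [Fintype Sout]
    (P : Sin → Sin → Sout → Sout → Prop)
    (I : ℤ → Sin) (u₀ : ℤ × Sout)
    (hmeet : ∀ k : ℕ, (∃ v, RRel P I u₀ v ∧ v.1 ≤ -(k : ℤ)) ∧
      (∃ v, RRel P I u₀ v ∧ (k : ℤ) ≤ v.1))
    (hpath :
      (∃ p : ℕ → ℤ × Sout, (∀ n, RRel P I u₀ (p n)) ∧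
        ∀ n, InputEdge P I (p n) (p (n + 1))) ∨
      (∃ p : ℕ → ℤ × Sout, (∀ n, RRel P I u₀ (p n)) ∧
        ∀ n, InputEdge P I (p (n + 1)) (p n))) :
    ∃ q : ℤ → ℤ × Sout, (∀ n, RRel P I u₀ (q n)) ∧
      ∀ n, InputEdge P I (q n) (q (n + 1)) := by
  have hC := pathConvex_setOf_rRel (P := P) (I := I) u₀
  obtain ⟨w, hw⟩ : ∃ w, ReachesBothWays (InputEdge P I) Prod.fst {v | RRel P I u₀ v} w := by
    rcases hpath with ⟨p, hpC, hp⟩ | ⟨p, hpC, hp⟩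
    · refine exists_reachesBothWays_of_path inputEdge_level_succ finite_setOf_fst_eq hC
        (fun m => ?_) hp hpC fun v hv => hv.exists_reflTransGen_to_path (hpC 0) hp
      obtain ⟨v, hv, hle⟩ := (hmeet (-m).toNat).1
      exact ⟨v, hv, by omega⟩
    · refine (exists_reachesBothWays_of_path (level_succ_flip inputEdge_level_succ)
        (finite_level_neg finite_setOf_fst_eq) hC.flip (fun m => ?_) hp hpC fun v hv =>
          (hv.exists_reflTransGen_from_path (hpC 0) hp).imp fun _ => reflTransGen_swap.2).imp
        fun _ => reachesBothWays_flip.1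
      obtain ⟨v, hv, hle⟩ := (hmeet (-m).toNat).2
      exact ⟨v, hv, by simp only [Pi.neg_apply]; omega⟩
  obtain ⟨q, hq, hqE⟩ := exists_int_path
    (fun _ h => h.exists_succ inputEdge_level_succ finite_setOf_fst_eq hC)
    (fun _ h => h.exists_pred inputEdge_level_succ finite_setOf_fst_eq hC) hw
  exact ⟨q, fun n => (hq n).1, hqE⟩

/-- Let `P` be the `ℜ`-class of a vertex `u₀` in the input graph
`G_𝓘`, and assume `P` meets slices arbitrarily far in both directions. If `P` contains
an infinite directed path (going to `+∞` or to `-∞`), then `P` contains a doubly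
infinite directed path of `G_𝓘`. -/
theorem class_with_infinite_path_has_doubly_infinite_path {Sin Sout : Type}
    [Fintype Sin] [Fintype Sout] [Nonempty Sin] [Nonempty Sout]
    (P : Sin → Sin → Sout → Sout → Prop) [∀ a b c d, Decidable (P a b c d)]
    (I : ℤ → Sin) (u₀ : ℤ × Sout)
    (hmeet : ∀ k : ℕ, (∃ v, RRel P I u₀ v ∧ v.1 ≤ -(k : ℤ)) ∧
      (∃ v, RRel P I u₀ v ∧ (k : ℤ) ≤ v.1))
    (hpath :
      (∃ p : ℕ → ℤ × Sout, (∀ n, RRel P I u₀ (p n)) ∧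
        ∀ n, InputEdge P I (p n) (p (n + 1))) ∨
      (∃ p : ℕ → ℤ × Sout, (∀ n, RRel P I u₀ (p n)) ∧
        ∀ n, InputEdge P I (p (n + 1)) (p n))) :
    ∃ q : ℤ → ℤ × Sout, (∀ n, RRel P I u₀ (q n)) ∧
      ∀ n, InputEdge P I (q n) (q (n + 1)) :=
  class_with_infinite_path_has_doubly_infinite_path_general P I u₀ hmeet hpath
end

section
/- Let Π = (Σ_in, Σ_out, P) be an LCL problem in normal form and 𝓘 : ℤ → Σ_in an input labeling. Assume every ℜ-class meets slices arbitrarily far in both directions. Let ⊲ be the transitive closure of the relation on ℜ-classes that relates P to P' whenever there is a directed path in G_𝓘 from some vertex of P to some vertex of P'. If P is an ℜ-class containing a doubly infinite directed path and Q ≠ Q' are ℜ-classes with Q ⊲ P ⊲ Q', then Q' ⊲ Q fails. In particular, ⊲ restricted to the ℜ-classes containing doubly infinite directed paths is a partial order. -/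
/-- The relation on `ℜ`-classes (represented by vertices): there is a directed path in
`G_𝓘` from the class of `u` to the class of `v`. -/
def ClassReach {Sin Sout : Type} (P : Sin → Sin → Sout → Sout → Prop) (I : ℤ → Sin)
    (u v : ℤ × Sout) : Prop :=
  ∃ u' v', RRel P I u u' ∧ RRel P I v v' ∧
    Relation.ReflTransGen (InputEdge P I) u' v'

/-- The class of `u` contains a doubly infinite directed path of `G_𝓘`. -/
def HasDIPath {Sin Sout : Type} (P : Sin → Sin → Sout → Sout → Prop) (I : ℤ → Sin)
    (u : ℤ × Sout) : Prop :=
  ∃ q : ℤ → ℤ × Sout, (∀ n, RRel P I u (q n)) ∧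
    ∀ n, InputEdge P I (q n) (q (n + 1))

/-!
A directed path from `u'` to `v'` gives `r_{v'} ⊆ r_{u'}` and `l_{u'} ⊆ l_{v'}`, and
`ℜ`-equivalent vertices have the same `r` and `l` sets up to finite sets. Hence along `⊲` the
sets `r` decrease and the sets `l` increase modulo finite sets (inclusion modulo finite sets
is `≤ᶠ[cofinite]`), and a `⊲`-cycle forces equality of both modulo finite sets, which is
`ℜ`-equivalence.
-/

open Filter Relation

theorem Set.finite_symmDiff_iff_eventuallyEq {α : Type*} {s t : Set α} :
    (symmDiff s t).Finite ↔ s =ᶠ[cofinite] t := by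
  rw [eventuallyEq_set, eventually_cofinite]
  congr!
  ext x
  simp only [Set.mem_symmDiff, Set.mem_ofPred_eq]
  tauto

section InputGraph

variable {Sin Sout : Type} {P : Sin → Sin → Sout → Sout → Prop} {I : ℤ → Sin}
  {u v : ℤ × Sout}

lemma rPlus_iff_eventuallyEq :
    RPlus P I u v ↔ rset P I u =ᶠ[cofinite] rset P I v :=
  Set.finite_symmDiff_iff_eventuallyEq

lemma rMinus_iff_eventuallyEq :
    RMinus P I u v ↔ lset P I u =ᶠ[cofinite] lset P I v :=
  Set.finite_symmDiff_iff_eventuallyEq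

lemma rset_subset_of_reflTransGen (h : ReflTransGen (InputEdge P I) u v) :
    rset P I v ⊆ rset P I u :=
  fun _ hx ↦ h.trans hx

lemma lset_subset_of_reflTransGen (h : ReflTransGen (InputEdge P I) u v) :
    lset P I u ⊆ lset P I v :=
  fun _ hx ↦ hx.trans h

lemma ClassReach.eventuallyLE (h : ClassReach P I u v) :
    rset P I v ≤ᶠ[cofinite] rset P I u ∧ lset P I u ≤ᶠ[cofinite] lset P I v := by
  obtain ⟨u', v', ⟨huu'_plus, huu'_minus⟩, ⟨hvv'_plus, hvv'_minus⟩, hpath⟩ := h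
  rw [rPlus_iff_eventuallyEq] at huu'_plus hvv'_plus
  rw [rMinus_iff_eventuallyEq] at huu'_minus hvv'_minus
  exact ⟨(hvv'_plus.trans_le (rset_subset_of_reflTransGen hpath).eventuallyLE).trans_eq
      huu'_plus.symm,
    (huu'_minus.trans_le (lset_subset_of_reflTransGen hpath).eventuallyLE).trans_eq
      hvv'_minus.symm⟩

lemma eventuallyLE_of_transGen_classReach (h : TransGen (ClassReach P I) u v) :
    rset P I v ≤ᶠ[cofinite] rset P I u ∧ lset P I u ≤ᶠ[cofinite] lset P I v :=
  h.trans_induction_on ClassReach.eventuallyLE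
    fun _ _ ⟨hr₁, hl₁⟩ ⟨hr₂, hl₂⟩ ↦ ⟨hr₂.trans hr₁, hl₁.trans hl₂⟩

lemma rrel_of_transGen_classReach (h₁ : TransGen (ClassReach P I) u v)
    (h₂ : TransGen (ClassReach P I) v u) : RRel P I u v := by
  obtain ⟨hr₁, hl₁⟩ := eventuallyLE_of_transGen_classReach h₁
  obtain ⟨hr₂, hl₂⟩ := eventuallyLE_of_transGen_classReach h₂
  exact ⟨rPlus_iff_eventuallyEq.2 (hr₂.antisymm hr₁),
    rMinus_iff_eventuallyEq.2 (hl₁.antisymm hl₂)⟩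

end InputGraph

theorem classReach_partial_order_general {Sin Sout : Type}
    (P : Sin → Sin → Sout → Sout → Prop)
    (I : ℤ → Sin) :
    (∀ p q q' : ℤ × Sout, HasDIPath P I p → ¬ RRel P I q q' →
      Relation.TransGen (ClassReach P I) q p →
      Relation.TransGen (ClassReach P I) p q' →
      ¬ Relation.TransGen (ClassReach P I) q' q) ∧
    (∀ p p' : ℤ × Sout, HasDIPath P I p → HasDIPath P I p' →
      Relation.TransGen (ClassReach P I) p p' →
      Relation.TransGen (ClassReach P I) p' p → RRel P I p p') :=
  ⟨fun _ _ _ _ hne hqp hpq' hq'q ↦ hne (rrel_of_transGen_classReach (hqp.trans hpq') hq'q),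
    fun _ _ _ _ h₁ h₂ ↦ rrel_of_transGen_classReach h₁ h₂⟩

/-- Assume every `ℜ`-class of `G_𝓘` meets slices arbitrarily far in
both directions, and let `⊲` be the transitive closure of the reachability relation on
`ℜ`-classes. If the class of `p` contains a doubly infinite directed path and the
classes of `q` and `q'` are distinct with `q ⊲ p ⊲ q'`, then `q' ⊲ q` fails. In
particular, `⊲` is antisymmetric (a partial order) on classes containing doubly
infinite directed paths. -/
theorem classReach_partial_order {Sin Sout : Type}
    [Fintype Sin] [Fintype Sout] [Nonempty Sin] [Nonempty Sout]
    (P : Sin → Sin → Sout → Sout → Prop) [∀ a b c d, Decidable (P a b c d)]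
    (I : ℤ → Sin)
    (hmeet : ∀ u : ℤ × Sout, ∀ k : ℕ, (∃ v, RRel P I u v ∧ v.1 ≤ -(k : ℤ)) ∧
      (∃ v, RRel P I u v ∧ (k : ℤ) ≤ v.1)) :
    (∀ p q q' : ℤ × Sout, HasDIPath P I p → ¬ RRel P I q q' →
      Relation.TransGen (ClassReach P I) q p →
      Relation.TransGen (ClassReach P I) p q' →
      ¬ Relation.TransGen (ClassReach P I) q' q) ∧
    (∀ p p' : ℤ × Sout, HasDIPath P I p → HasDIPath P I p' →
      Relation.TransGen (ClassReach P I) p p' →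
      Relation.TransGen (ClassReach P I) p' p → RRel P I p p') :=
  classReach_partial_order_general P I
end

section
/- Let Π = (Σ_in, Σ_out, P) be an LCL problem in normal form, σ ∈ Σ_in and (Υ,∇) a subpartition of Σ_out. If B and B' are permutation σ-blocks on (Υ,∇) witnessed by permutations π_B and π_{B'}, then the concatenation B⌢B' (identifying the last letter of B with the first letter of B') is a permutation σ-block on (Υ,∇) witnessed by the composition π_{B'} ∘ π_B. Consequently, if Γ_{σ,(Υ,∇)} is nonempty, then it is a subgroup of the symmetric group on the set of ∇-classes: it is closed under composition and under taking inverses, and contains the identity. -/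
open MeasureTheory

/-- Concatenation of two blocks, identifying the last letter of the first block (of
length `t`) with the first letter of the second one. -/
def blockConcat {Sin : Type} (B B' : ℕ → Sin) (t : ℕ) : ℕ → Sin :=
  fun k => if k ≤ t then B k else B' (k - t)

/-!
A path through the block graph of `B⌢B'` splits at time `t` into a path through `B` and one
through `B'`. Transitivity of `⪯` gives condition (2) for the concatenation. If the endpoints
of the path are `ℙ`-equivalent, antisymmetry of `⪯` forces the splitting point into the same
`ℙ`-class, so conditions (3) and (4) follow from those of `B` and `B'`. Hence `Γ` is closed
under products; in the finite group of permutations of the `∇`-classes, `1` and `π⁻¹` are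
positive powers of `π`, so a nonempty product-closed subset is a subgroup.
-/

section Concat

variable {Sin Sout : Type} {B B' : ℕ → Sin} {t t' : ℕ}

theorem blockConcat_of_le {k : ℕ} (hk : k ≤ t) : blockConcat B B' t k = B k :=
  if_pos hk

theorem blockConcat_add (hBB' : B t = B' 0) (j : ℕ) : blockConcat B B' t (t + j) = B' j := by
  rcases Nat.eq_zero_or_pos j with rfl | hj
  · simpa [blockConcat] using hBB'
  · simp only [blockConcat, if_neg (show ¬t + j ≤ t by omega), Nat.add_sub_cancel_left]

theorem BlockType.exists_mid_of_blockConcat {P : Sin → Sin → Sout → Sout → Prop} {a b : Sout}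
    (hBB' : B t = B' 0) (h : BlockType P (blockConcat B B' t) (t + t') a b) :
    ∃ c, BlockType P B t a c ∧ BlockType P B' t' c b := by
  obtain ⟨g, rfl, rfl, hg⟩ := h
  refine ⟨g t, ⟨g, rfl, rfl, fun j hj => ?_⟩, ⟨fun k => g (t + k), rfl, rfl, fun j hj => ?_⟩⟩
  · simpa only [blockConcat_of_le hj.le, blockConcat_of_le hj] using hg j (by omega)
  · simpa only [Nat.add_assoc, blockConcat_add hBB'] using hg (t + j) (by omega)

end Concat

namespace Subpartition

variable {Sout : Type} (sp : Subpartition Sout)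

theorem pp_of_preceq_of_preceq {a b c : Sout} (hac : sp.preceq a c) (hcb : sp.preceq c b)
    (hab : sp.pp a b) : sp.pp a c :=
  sp.preceq_antisymm hac (sp.preceq_congr (sp.pp_equiv.refl c) (sp.pp_equiv.symm hab) hcb)

instance [Finite Sout] : Finite sp.Classes :=
  Quotient.finite _

end Subpartition

namespace IsPermutationBlock

variable {Sin Sout : Type} {P : Sin → Sin → Sout → Sout → Prop} {σ : Sin}
  {sp : Subpartition Sout} {B B' : ℕ → Sin} {t t' : ℕ} {π π' : Equiv.Perm sp.Classes}

theorem concat (hB : IsPermutationBlock P σ sp B t π) (hB' : IsPermutationBlock P σ sp B' t' π') :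
    IsPermutationBlock P σ sp (blockConcat B B' t) (t + t') (π' * π) := by
  obtain ⟨hB0, hBt, hπ_pp, hB_preceq, hB_out, hπ_type⟩ := hB
  obtain ⟨hB'0, hB't, hπ'_pp, hB'_preceq, hB'_out, hπ'_type⟩ := hB'
  have hBB' : B t = B' 0 := hBt.trans hB'0.symm
  refine ⟨(blockConcat_of_le t.zero_le).trans hB0, (blockConcat_add hBB' t').trans hB't,
    fun a b hab => ?_, fun a b hab => ?_, fun a b ha hab hpp => ?_, fun a b hab hpp => ?_⟩
  · obtain ⟨c, hc⟩ := Quotient.exists_rep (π (sp.cls a))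
    exact sp.pp_equiv.trans (hπ_pp a c hc.symm) 
      (hπ'_pp c b (by rwa [Equiv.Perm.mul_apply, ← hc] at hab))
  · obtain ⟨c, hac, hcb⟩ := hab.exists_mid_of_blockConcat hBB'
    exact sp.preceq_trans (hB_preceq a c hac) (hB'_preceq c b hcb)
  · obtain ⟨c, hac, hcb⟩ := hab.exists_mid_of_blockConcat hBB'
    exact hB_out a c ha hac
      (sp.pp_of_preceq_of_preceq (hB_preceq a c hac) (hB'_preceq c b hcb) hpp)
  · obtain ⟨c, hac, hcb⟩ := hab.exists_mid_of_blockConcat hBB'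
    have hpp_ac := sp.pp_of_preceq_of_preceq (hB_preceq _ c hac) (hB'_preceq c _ hcb) hpp
    have hpp_cb : sp.pp c b := sp.pp_equiv.trans (sp.pp_equiv.symm hpp_ac) hpp
    have hc : c ∈ sp.dom := by_contra fun hc => hB'_out c b hc hcb hpp_cb
    rw [Equiv.Perm.mul_apply, hπ_type a ⟨c, hc⟩ hac hpp_ac]
    exact hπ'_type ⟨c, hc⟩ b hcb hpp_cb

end IsPermutationBlock

theorem Gamma.mul_mem {Sin Sout : Type} {P : Sin → Sin → Sout → Sout → Prop} {σ : Sin}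
    {sp : Subpartition Sout} {π₁ π₂ : Equiv.Perm sp.Classes} (h₁ : π₁ ∈ Gamma P σ sp)
    (h₂ : π₂ ∈ Gamma P σ sp) : π₁ * π₂ ∈ Gamma P σ sp := by
  obtain ⟨B₁, t₁, hB₁⟩ := h₁
  obtain ⟨B₂, t₂, hB₂⟩ := h₂
  exact ⟨_, _, hB₂.concat hB₁⟩

theorem pow_mem_of_mul_mem {M : Type*} [Monoid M] {S : Set M}
    (hmul : ∀ x ∈ S, ∀ y ∈ S, x * y ∈ S) {x : M} (hx : x ∈ S)
    (hfin : IsOfFinOrder x) (n : ℕ) : x ^ n ∈ S := by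
  have pow_succ_mem : ∀ k : ℕ, x ^ (k + 1) ∈ S := by
    intro k
    induction k with
    | zero => simpa using hx
    | succ k ih => exact pow_succ x (k + 1) ▸ hmul _ ih x hx
  have hpos := hfin.orderOf_pos
  have hn : x ^ n = x ^ (n + orderOf x - 1 + 1) := by
    rw [Nat.sub_add_cancel (by omega), pow_add, pow_orderOf_eq_one, mul_one]
  exact hn ▸ pow_succ_mem _

theorem inv_mem_of_mul_mem {G : Type*} [Group G] {S : Set G}
    (hmul : ∀ x ∈ S, ∀ y ∈ S, x * y ∈ S) {x : G} (hx : x ∈ S) (hfin : IsOfFinOrder x) :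
    x⁻¹ ∈ S := by
  have hinv : x⁻¹ = x ^ (orderOf x - 1) := by
    refine inv_eq_of_mul_eq_one_right ?_
    rw [← pow_succ', Nat.sub_add_cancel hfin.orderOf_pos, pow_orderOf_eq_one]
  exact hinv ▸ pow_mem_of_mul_mem hmul hx hfin _

theorem permutationBlock_concat_and_Gamma_subgroup_general {Sin Sout : Type}
    [Fintype Sout]
    (P : Sin → Sin → Sout → Sout → Prop)
    (σ : Sin) (sp : Subpartition Sout) :
    (∀ (B B' : ℕ → Sin) (t t' : ℕ) (π π' : Equiv.Perm sp.Classes),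
      IsPermutationBlock P σ sp B t π → IsPermutationBlock P σ sp B' t' π' →
      IsPermutationBlock P σ sp (blockConcat B B' t) (t + t') (π' * π)) ∧
    ((Gamma P σ sp).Nonempty →
      (∀ π₁ ∈ Gamma P σ sp, ∀ π₂ ∈ Gamma P σ sp, π₁ * π₂ ∈ Gamma P σ sp) ∧
      (∀ π₁ ∈ Gamma P σ sp, π₁⁻¹ ∈ Gamma P σ sp) ∧
      (1 : Equiv.Perm sp.Classes) ∈ Gamma P σ sp) := by
  have hmul : ∀ π₁ ∈ Gamma P σ sp, ∀ π₂ ∈ Gamma P σ sp, π₁ * π₂ ∈ Gamma P σ sp :=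
    fun _ h₁ _ h₂ => Gamma.mul_mem h₁ h₂
  refine ⟨fun _ _ _ _ _ _ hB hB' => hB.concat hB', fun ⟨π₀, hπ₀⟩ => ⟨hmul, ?_, ?_⟩⟩
  · exact fun π hπ => inv_mem_of_mul_mem hmul hπ (isOfFinOrder_of_finite π)
  · simpa using pow_mem_of_mul_mem hmul hπ₀ (isOfFinOrder_of_finite π₀) 0

/-- The concatenation of two permutation `σ`-blocks on a subpartition
`(Υ,∇)`, witnessed by `π_B` and `π_{B'}`, is a permutation `σ`-block witnessed by the
composition `π_{B'} ∘ π_B`. Consequently, if `Γ_{σ,(Υ,∇)}` is nonempty then it is a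
subgroup of the symmetric group on the set of `∇`-classes: it is closed under
composition and inverses and contains the identity. -/
theorem permutationBlock_concat_and_Gamma_subgroup {Sin Sout : Type}
    [Fintype Sin] [Fintype Sout] [Nonempty Sin] [Nonempty Sout]
    (P : Sin → Sin → Sout → Sout → Prop) [∀ a b c d, Decidable (P a b c d)]
    (σ : Sin) (sp : Subpartition Sout) :
    (∀ (B B' : ℕ → Sin) (t t' : ℕ) (π π' : Equiv.Perm sp.Classes),
      IsPermutationBlock P σ sp B t π → IsPermutationBlock P σ sp B' t' π' →
      IsPermutationBlock P σ sp (blockConcat B B' t) (t + t') (π' * π)) ∧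
    ((Gamma P σ sp).Nonempty →
      (∀ π₁ ∈ Gamma P σ sp, ∀ π₂ ∈ Gamma P σ sp, π₁ * π₂ ∈ Gamma P σ sp) ∧
      (∀ π₁ ∈ Gamma P σ sp, π₁⁻¹ ∈ Gamma P σ sp) ∧
      (1 : Equiv.Perm sp.Classes) ∈ Gamma P σ sp) :=
  permutationBlock_concat_and_Gamma_subgroup_general P σ sp
end

section
/- Let Π = (Σ_in, Σ_out, P) be an LCL problem in normal form and σ ∈ Σ_in. For every σ-block B there exists a σ-block B' with type(B') = type(B) and length at most |Σ_in| · 2^{|Σ_out|·|Σ_out|}. -/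
open MeasureTheory

/-!
If a block is longer than `|Σ_in| · 2^(|Σ_out|·|Σ_out|)`, then by pigeonhole two of its
prefixes, of lengths `j < k`, end at the same input and have the same type. The type of a
prefix extended by given inputs depends only on the type of the prefix, so cutting out the
inputs at positions `j + 1, …, k` leaves the type of the whole block unchanged; iterating
shortens the block below the bound.
-/

section Pumping

variable {Sin Sout : Type} (P : Sin → Sin → Sout → Sout → Prop)

theorem blockType_succ (B : ℕ → Sin) (t : ℕ) (a b : Sout) :
    BlockType P B (t + 1) a b ↔ ∃ c, BlockType P B t a c ∧ P (B t) (B (t + 1)) c b := by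
  constructor
  · rintro ⟨g, rfl, rfl, hg⟩
    exact ⟨g t, ⟨g, rfl, rfl, fun j hj => hg j (by omega)⟩, hg t (by omega)⟩
  · rintro ⟨c, ⟨g, rfl, rfl, hg⟩, hstep⟩
    refine ⟨fun n => if n ≤ t then g n else b, by simp, by simp, fun j hj => ?_⟩
    rcases Nat.lt_or_eq_of_le (Nat.le_of_lt_succ hj) with hj | rfl
    · simpa [hj.le, Nat.succ_le_of_lt hj] using hg j hj
    · simpa using hstep

theorem blockType_congr {B B' : ℕ → Sin} {t : ℕ} (h : ∀ n ≤ t, B n = B' n) :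
    BlockType P B t = BlockType P B' t := by
  ext a b
  constructor <;> rintro ⟨g, hg0, hgt, hg⟩ <;> refine ⟨g, hg0, hgt, fun j hj => ?_⟩
  · rw [← h j (by omega), ← h (j + 1) (by omega)]; exact hg j hj
  · rw [h j (by omega), h (j + 1) (by omega)]; exact hg j hj

theorem blockType_add_eq {B B' : ℕ → Sin} {j k : ℕ} (hB : ∀ n, B' (j + n) = B (k + n))
    (htype : BlockType P B' j = BlockType P B k) (n : ℕ) :
    BlockType P B' (j + n) = BlockType P B (k + n) := by
  induction n with
  | zero => exact htype
  | succ n ih =>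
    ext a b
    rw [← Nat.add_assoc, ← Nat.add_assoc, blockType_succ, blockType_succ, ih,
      Nat.add_assoc, Nat.add_assoc, hB, hB]

def cutSegment {α : Type} (B : ℕ → α) (j k : ℕ) : ℕ → α :=
  fun n => if n ≤ j then B n else B (n + k - j)

theorem cutSegment_add {α : Type} {B : ℕ → α} {j k : ℕ} (hB : B j = B k) (n : ℕ) :
    cutSegment B j k (j + n) = B (k + n) := by
  rcases n with _ | n
  · simpa [cutSegment] using hB
  · simp only [cutSegment, if_neg (by omega : ¬ j + (n + 1) ≤ j)]
    congr 1
    omega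

theorem blockType_cutSegment {B : ℕ → Sin} {j k : ℕ} (hB : B j = B k)
    (htype : BlockType P B j = BlockType P B k) (n : ℕ) :
    BlockType P (cutSegment B j k) (j + n) = BlockType P B (k + n) := by
  refine blockType_add_eq P (cutSegment_add hB) ?_ n
  rw [← htype]
  exact blockType_congr P fun n hn => if_pos hn

open Classical in
theorem exists_prefixes_eq_of_card_lt [Fintype Sin] [Fintype Sout] (B : ℕ → Sin) {t : ℕ}
    (ht : Fintype.card Sin * 2 ^ (Fintype.card Sout * Fintype.card Sout) < t) :
    ∃ j k, j < k ∧ k ≤ t ∧ B j = B k ∧ BlockType P B j = BlockType P B k := by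
  let prefixData : ℕ → Sin × (Sout → Sout → Prop) := fun m => (B m, BlockType P B m)
  have hcard : Fintype.card (Sin × (Sout → Sout → Prop)) < (Finset.range (t + 1)).card := by
    simpa [Fintype.card_fun, ← pow_mul] using Nat.lt_succ_of_lt ht
  obtain ⟨i, hi, i', hi', hne, heq⟩ := Finset.exists_ne_map_eq_of_card_lt_of_maps_to
    (s := Finset.range (t + 1)) (t := Finset.univ) (by simpa using hcard) (f := prefixData)
    (fun _ _ => Finset.mem_univ _)
  simp only [Finset.mem_range, prefixData, Prod.ext_iff] at hi hi' heq
  rcases Nat.lt_or_gt_of_ne hne with h | h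
  · exact ⟨i, i', h, by omega, heq⟩
  · exact ⟨i', i, h, by omega, heq.1.symm, heq.2.symm⟩

end Pumping

theorem block_pumping_general {Sin Sout : Type}
    [Fintype Sin] [Fintype Sout]
    (P : Sin → Sin → Sout → Sout → Prop)
    (σ : Sin) (B : ℕ → Sin) (t : ℕ) (h0 : B 0 = σ) (ht : B t = σ) :
    ∃ (B' : ℕ → Sin) (t' : ℕ), B' 0 = σ ∧ B' t' = σ ∧
      t' ≤ Fintype.card Sin * 2 ^ (Fintype.card Sout * Fintype.card Sout) ∧
      ∀ a b : Sout, BlockType P B' t' a b ↔ BlockType P B t a b := by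
  induction t using Nat.strong_induction_on generalizing B with
  | _ t ih =>
  by_cases hshort : t ≤ Fintype.card Sin * 2 ^ (Fintype.card Sout * Fintype.card Sout)
  · exact ⟨B, t, h0, ht, hshort, fun _ _ => Iff.rfl⟩
  obtain ⟨j, k, hjk, hkt, hB, htype⟩ := exists_prefixes_eq_of_card_lt P B (not_le.mp hshort)
  obtain ⟨m, rfl⟩ := Nat.exists_eq_add_of_le hkt
  have hcut := blockType_cutSegment P hB htype m
  obtain ⟨B', t', h0', ht', hle, htype'⟩ := ih (j + m) (by omega) (cutSegment B j k)
    (by simpa [cutSegment] using h0) (by rw [cutSegment_add hB, ht])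
  exact ⟨B', t', h0', ht', hle, fun a b => by rw [htype' a b, hcut]⟩

/-- Every `σ`-block has the same type as some `σ`-block of length at
most `|Σin| · 2^{|Σout|·|Σout|}`. -/
theorem block_pumping {Sin Sout : Type}
    [Fintype Sin] [Fintype Sout] [Nonempty Sin] [Nonempty Sout]
    (P : Sin → Sin → Sout → Sout → Prop) [∀ a b c d, Decidable (P a b c d)]
    (σ : Sin) (B : ℕ → Sin) (t : ℕ) (h0 : B 0 = σ) (ht : B t = σ) :
    ∃ (B' : ℕ → Sin) (t' : ℕ), B' 0 = σ ∧ B' t' = σ ∧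
      t' ≤ Fintype.card Sin * 2 ^ (Fintype.card Sout * Fintype.card Sout) ∧
      ∀ a b : Sout, BlockType P B' t' a b ↔ BlockType P B t a b :=
  block_pumping_general P σ B t h0 ht
end

section
/- Let Π = (Σ_in, Σ_out, P) be an LCL problem in normal form. There exists an input labeling 𝓘 : ℤ → Σ_in that admits no Π-coloring if and only if there exist σ ∈ Σ_in and a σ-block B with type(B) = ∅. -/
open MeasureTheory

/-!
An input admits a coloring as soon as every finite window of it does, by compactness of
`ℤ → Σ_out`. A window `I m, …, I (m + t)` can be closed up into a block by appending `I m`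
once more, so if every block has nonempty type then every window is colorable. Conversely, a
coloring of the input `i ↦ B i` restricts to a path through the block graph of `B`.
-/

section Compactness

variable {α : Type} [Finite α]

theorem exists_forall_rel_of_forall_Ico (R : ℤ → α → α → Prop)
    (h : ∀ n : ℕ, ∃ f : ℤ → α, ∀ i ∈ Set.Ico (-(n : ℤ)) n, R i (f i) (f (i + 1))) :
    ∃ f : ℤ → α, ∀ i, R i (f i) (f (i + 1)) := by
  let _ : TopologicalSpace α := ⊥
  have : DiscreteTopology α := ⟨rfl⟩
  set C : ℕ → Set (ℤ → α) := fun n => ⋂ i ∈ Set.Ico (-(n : ℤ)) n, {f | R i (f i) (f (i + 1))}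
  have hclosed (n : ℕ) : IsClosed (C n) :=
    isClosed_biInter fun i _ =>
      IsClosed.preimage (f := fun f : ℤ → α => (f i, f (i + 1))) (by fun_prop)
        (isClosed_discrete {p : α × α | R i p.1 p.2})
  have hdir : Directed (· ⊇ ·) C := by
    intro m n
    refine ⟨max m n, ?_, ?_⟩ <;>
      exact Set.biInter_subset_biInter_left (Set.Ico_subset_Ico (by simp) (by simp))
  have hne (n : ℕ) : (C n).Nonempty := by simpa [C, Set.nonempty_def] using h n
  obtain ⟨f, hf⟩ := IsCompact.nonempty_iInter_of_directed_nonempty_isCompact_isClosed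
    C hdir hne (fun n => (hclosed n).isCompact) hclosed
  refine ⟨f, fun i => ?_⟩
  have hi := Set.mem_iInter.mp hf i.natAbs.succ
  simp only [C, Set.mem_iInter] at hi
  exact hi i (by simp only [Set.mem_Ico]; omega)

end Compactness

section Blocks

variable {Sin Sout : Type} {P : Sin → Sin → Sout → Sout → Prop}

theorem blockType_of_forall {I : ℤ → Sin} {f : ℤ → Sout}
    (hf : ∀ i, P (I i) (I (i + 1)) (f i) (f (i + 1))) (t : ℕ) :
    BlockType P (fun j : ℕ => I j) t (f 0) (f t) :=
  ⟨fun j => f j, rfl, rfl, fun j _ => by exact_mod_cast hf j⟩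

theorem exists_forall_Ico_of_blockType
    (hB : ∀ (B : ℕ → Sin) (t : ℕ), B 0 = B t → ∃ a b, BlockType P B t a b)
    (I : ℤ → Sin) (m : ℤ) (t : ℕ) :
    ∃ f : ℤ → Sout, ∀ i ∈ Set.Ico m (m + t), P (I i) (I (i + 1)) (f i) (f (i + 1)) := by
  set B : ℕ → Sin := Function.update (fun j : ℕ => I (m + j)) (t + 1) (I m)
  have hB_eq (k : ℕ) (hk : k ≠ t + 1) : B k = I (m + k) := Function.update_of_ne hk _ _
  have hB0 : B 0 = B (t + 1) := by simp [B]
  obtain ⟨-, -, g, -, -, hg⟩ := hB B (t + 1) hB0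
  refine ⟨fun i => g (i - m).toNat, fun i hi => ?_⟩
  rw [Set.mem_Ico] at hi
  have hj : (i + 1 - m).toNat = (i - m).toNat + 1 := by omega
  have hBj : B (i - m).toNat = I i := by
    rw [hB_eq _ (by omega)]
    congr 1
    omega
  have hBj1 : B ((i - m).toNat + 1) = I (i + 1) := by
    rw [hB_eq _ (by omega)]
    congr 1
    omega
  simpa only [hj, hBj, hBj1] using hg (i - m).toNat (by omega)

theorem exists_forall_of_blockType [Finite Sout]
    (hB : ∀ (B : ℕ → Sin) (t : ℕ), B 0 = B t → ∃ a b, BlockType P B t a b)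
    (I : ℤ → Sin) :
    ∃ f : ℤ → Sout, ∀ i, P (I i) (I (i + 1)) (f i) (f (i + 1)) := by
  refine exists_forall_rel_of_forall_Ico _ fun n => ?_
  obtain ⟨f, hf⟩ := exists_forall_Ico_of_blockType hB I (-n) (2 * n)
  exact ⟨f, fun i hi => hf i (by simp only [Set.mem_Ico] at hi ⊢; omega)⟩

end Blocks

theorem exists_unsolvable_input_iff_empty_type_block_general {Sin Sout : Type}
    [Fintype Sout]
    (P : Sin → Sin → Sout → Sout → Prop) :
    (∃ I : ℤ → Sin, ¬ ∃ f : ℤ → Sout, ∀ i : ℤ, P (I i) (I (i + 1)) (f i) (f (i + 1))) ↔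
    (∃ (σ : Sin) (B : ℕ → Sin) (t : ℕ), B 0 = σ ∧ B t = σ ∧
      ∀ a b : Sout, ¬ BlockType P B t a b) := by
  constructor
  · rintro ⟨I, hI⟩
    by_contra! h
    exact hI (exists_forall_of_blockType (fun B t hBt => h _ B t rfl hBt.symm) I)
  · rintro ⟨σ, B, t, -, -, hempty⟩
    refine ⟨fun i => B i.toNat, fun ⟨f, hf⟩ => hempty (f 0) (f t) ?_⟩
    simpa using blockType_of_forall (I := fun i => B i.toNat) hf t

/-- There exists an input labeling `𝓘 : ℤ → Σin` admitting no
`Π`-coloring if and only if there exist `σ ∈ Σin` and a `σ`-block `B` with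
`type(B) = ∅`. -/
theorem exists_unsolvable_input_iff_empty_type_block {Sin Sout : Type}
    [Fintype Sin] [Fintype Sout] [Nonempty Sin] [Nonempty Sout]
    (P : Sin → Sin → Sout → Sout → Prop) [∀ a b c d, Decidable (P a b c d)] :
    (∃ I : ℤ → Sin, ¬ ∃ f : ℤ → Sout, ∀ i : ℤ, P (I i) (I (i + 1)) (f i) (f (i + 1))) ↔
    (∃ (σ : Sin) (B : ℕ → Sin) (t : ℕ), B 0 = σ ∧ B t = σ ∧
      ∀ a b : Sout, ¬ BlockType P B t a b) :=
  exists_unsolvable_input_iff_empty_type_block_general P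
end

section
/- Let α be an irrational real number. There is no Lebesgue (Haar) measurable function f : ℝ/ℤ → Bool such that f(x + α) ≠ f(x) for almost every x ∈ ℝ/ℤ. In particular, the graph on the circle induced by rotation by α admits no Lebesgue measurable proper 2-coloring. -/
open MeasureTheory

attribute [local instance] ZeroLEOneClass.factZeroLtOne

/-- A `Bool`-valued function that alternates along `T` is invariant under `T^[2]`, hence a.e.
constant when `T^[2]` is quasi-ergodic; but then it cannot alternate. -/
theorem MeasureTheory.Measure.QuasiMeasurePreserving.not_ae_comp_ne_of_quasiErgodic_iterate_two
    {X : Type*} [MeasurableSpace X] {μ : Measure X} [NeZero μ] {T : X → X}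
    (hT : Measure.QuasiMeasurePreserving T μ μ) (hT₂ : QuasiErgodic T^[2] μ)
    {f : X → Bool} (hf : Measurable f) : ¬ ∀ᵐ x ∂μ, f (T x) ≠ f x := by
  intro hne
  have hinv : f ∘ T^[2] =ᵐ[μ] f := by
    filter_upwards [hT.ae hne, hne] with x hx₂ hx₁
    show f (T (T x)) = f x
    rw [Bool.eq_not.2 hx₂, Bool.eq_not.2 hx₁, Bool.not_not]
  obtain ⟨c, hc⟩ := hT₂.ae_eq_const_of_ae_eq_comp₀ hf.nullMeasurable hinv
  obtain ⟨x, hx, hx₀, hx₁⟩ := (hne.and (hc.and (hT.ae hc))).exists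
  exact hx (hx₁.trans hx₀.symm)

theorem AddCircle.ergodic_add_right_iterate {p : ℝ} [Fact (0 < p)] {a : AddCircle p}
    (ha : addOrderOf a = 0) {n : ℕ} (hn : n ≠ 0) : Ergodic (· + a)^[n] := by
  rw [add_right_iterate, AddCircle.ergodic_add_right, addOrderOf_eq_zero_iff,
    isOfFinAddOrder_nsmul]
  simpa [hn] using ha

theorem AddCircle.addOrderOf_coe_eq_zero_of_irrational {p a : ℝ} [Fact (0 < p)]
    (ha : Irrational (a / p)) : addOrderOf (a : AddCircle p) = 0 :=
  addOrderOf_eq_zero_iff.2 <|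
    AddCircle.not_isOfFinAddOrder_iff_forall_rat_ne_div.2 fun q hq => ha ⟨q, hq⟩

/-- For irrational `α`, there is no Lebesgue (Haar) measurable
`f : ℝ/ℤ → Bool` with `f (x + α) ≠ f x` for almost every `x`; that is, the graph on the
circle induced by the rotation by `α` admits no Lebesgue measurable proper 2-coloring. -/
theorem no_measurable_two_coloring_of_irrational_rotation
    (α : ℝ) (hα : Irrational α) :
    ¬ ∃ f : AddCircle (1 : ℝ) → Bool, Measurable f ∧
      ∀ᵐ x : AddCircle (1 : ℝ), f (x + (α : AddCircle (1 : ℝ))) ≠ f x := by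
  rintro ⟨f, hf, hne⟩
  have hα₁ : addOrderOf (α : AddCircle (1 : ℝ)) = 0 :=
    AddCircle.addOrderOf_coe_eq_zero_of_irrational (by rwa [div_one])
  exact (measurePreserving_add_right volume _).quasiMeasurePreserving
    |>.not_ae_comp_ne_of_quasiErgodic_iterate_two
      (AddCircle.ergodic_add_right_iterate hα₁ two_ne_zero).quasiErgodic hf hne
end

section
/- Let α ∈ (0,1) be an irrational real number. There exists a function f : ℝ/ℤ → Fin 3 such that f(x + α) ≠ f(x) for every x ∈ ℝ/ℤ, and for each color c ∈ Fin 3 the preimage f⁻¹(c) is a finite union of arcs (images under the quotient map ℝ → ℝ/ℤ of finitely many half-open intervals). -/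
/-!
Put `β = α` if `α ≤ 1/2` and `β = 1 - α` otherwise; rotation by `1 - α` is the inverse of rotation
by `α`, so it has the same graph. Cut the circle, from `0`, into consecutive arcs `[kβ, (k+1)β)`,
the last one truncated at `1`. Rotation by `β` carries each arc into the next one or, from the last
two arcs, into the first. So colouring the arcs `0, 1, 0, 1, …` and the last two `2, 1` is proper:
consecutive arcs differ, and the last two avoid the colour `0` of the first.
-/

open Set AddCircle

def IsFiniteUnionOfArcs (s : Set (AddCircle (1 : ℝ))) : Prop :=
  ∃ (n : ℕ) (a b : Fin n → ℝ), (∀ k, b k - a k < 1) ∧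
    s = ⋃ k, (fun r : ℝ => (r : AddCircle (1 : ℝ))) '' Ico (a k) (b k)

lemma isFiniteUnionOfArcs_iUnion {n : ℕ} (p : Fin n → Prop) {a b : Fin n → ℝ}
    (hab : ∀ k, b k - a k < 1) :
    IsFiniteUnionOfArcs
      (⋃ (k) (_ : p k), (fun r : ℝ => (r : AddCircle (1 : ℝ))) '' Ico (a k) (b k)) := by
  classical
  -- unselected arcs become the empty arc `[0, 0)`
  refine ⟨n, fun k => if p k then a k else 0, fun k => if p k then b k else 0,
    fun k => ?_, iUnion_congr fun k => ?_⟩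
  · dsimp only
    split_ifs <;> simp [hab k]
  · by_cases hk : p k <;> simp [hk]

lemma AddCircle.liftIco_preimage {𝕜 B : Type*} [AddCommGroup 𝕜] [LinearOrder 𝕜]
    [IsOrderedAddMonoid 𝕜] [Archimedean 𝕜] {p : 𝕜} [Fact (0 < p)] (a : 𝕜) (f : 𝕜 → B)
    (s : Set B) : liftIco p a f ⁻¹' s = (↑) '' (Ico a (a + p) ∩ f ⁻¹' s) := by
  ext y
  constructor
  · exact fun hy => ⟨equivIco p a y, ⟨(equivIco p a y).2, hy⟩, coe_equivIco⟩
  · rintro ⟨t, ⟨ht, hft⟩, rfl⟩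
    rwa [mem_preimage, liftIco_coe_apply ht]

def stripeColor (N k : ℕ) : Fin 3 :=
  if k + 2 ≤ N then (if k % 2 = 0 then 0 else 1) else if k + 1 = N then 2 else 1

lemma stripeColor_zero {N : ℕ} (hN : 2 ≤ N) : stripeColor N 0 = 0 := by
  simp [stripeColor, hN]

lemma stripeColor_succ_ne {N k : ℕ} (hk : k < N) : stripeColor N (k + 1) ≠ stripeColor N k := by
  unfold stripeColor
  split_ifs <;> first | decide | omega

lemma stripeColor_ne_zero {N k : ℕ} (hk : N ≤ k + 1) : stripeColor N k ≠ 0 := by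
  unfold stripeColor
  split_ifs <;> first | decide | omega

section Stripes

variable {β : ℝ}

lemma Nat.floor_div_eq_iff_mem_Ico (hβ : 0 < β) {t : ℝ} (ht : 0 ≤ t) {k : ℕ} :
    ⌊t / β⌋₊ = k ↔ t ∈ Ico (k * β) ((k + 1) * β) := by
  rw [Nat.floor_eq_iff (div_nonneg ht hβ.le), le_div_iff₀ hβ, div_lt_iff₀ hβ, mem_Ico]

lemma Nat.floor_add_self_div (hβ : 0 < β) {t : ℝ} (ht : 0 ≤ t) :
    ⌊(t + β) / β⌋₊ = ⌊t / β⌋₊ + 1 := by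
  rw [add_div, div_self hβ.ne', Nat.floor_add_one (div_nonneg ht hβ.le)]

lemma Ico_inter_preimage_floor_div (hβ : 0 < β) {X : Type*} (φ : ℕ → X) (s : Set X) :
    Ico 0 1 ∩ (fun t => φ ⌊t / β⌋₊) ⁻¹' s =
      ⋃ (k : Fin (⌊1 / β⌋₊ + 1)) (_ : φ k ∈ s), Ico (k * β) (min ((k + 1) * β) 1) := by
  ext t
  simp only [mem_inter_iff, mem_preimage, mem_iUnion, mem_Ico, lt_min_iff, exists_prop]
  constructor
  · rintro ⟨⟨ht0, ht1⟩, hs⟩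
    have hk := (Nat.floor_div_eq_iff_mem_Ico hβ ht0).1 rfl
    exact ⟨⟨⌊t / β⌋₊, Nat.lt_succ_of_le (Nat.floor_le_floor (by gcongr))⟩, hs, hk.1, hk.2, ht1⟩
  · rintro ⟨k, hs, hkt, htk, ht1⟩
    have ht0 : 0 ≤ t := le_trans (by positivity) hkt
    rw [(Nat.floor_div_eq_iff_mem_Ico hβ ht0).2 ⟨hkt, htk⟩]
    exact ⟨⟨ht0, ht1⟩, hs⟩

noncomputable def stripeColoring (β : ℝ) : AddCircle (1 : ℝ) → Fin 3 :=
  liftIco 1 0 fun t => stripeColor ⌊1 / β⌋₊ ⌊t / β⌋₊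

lemma stripeColoring_add_ne (hβ : 0 < β) (hβ_half : β ≤ 1 / 2) (x : AddCircle (1 : ℝ)) :
    stripeColoring β (x + β) ≠ stripeColoring β x := by
  obtain ⟨u, hu, rfl⟩ : ∃ u ∈ Ico (0 : ℝ) 1, (u : AddCircle (1 : ℝ)) = x :=
    ⟨_, by simpa using (equivIco 1 0 x).2, coe_equivIco⟩
  have hN : 2 ≤ ⌊1 / β⌋₊ := Nat.le_floor (by rw [le_div_iff₀ hβ]; push_cast; linarith)
  have hsucc := Nat.floor_add_self_div hβ hu.1
  rw [stripeColoring, liftIco_zero_coe_apply hu, ← coe_add]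
  rcases lt_or_ge (u + β) 1 with hlt | hge
  · have hk : ⌊u / β⌋₊ + 1 ≤ ⌊1 / β⌋₊ := hsucc ▸ Nat.floor_le_floor (by gcongr)
    rw [liftIco_zero_coe_apply ⟨by linarith [hu.1], hlt⟩, hsucc]
    exact stripeColor_succ_ne hk
  · have hk : ⌊1 / β⌋₊ ≤ ⌊u / β⌋₊ + 1 := hsucc ▸ Nat.floor_le_floor (by gcongr)
    have hwrap : ⌊(u + β - 1) / β⌋₊ = 0 :=
      Nat.floor_eq_zero.2 (by rw [div_lt_one hβ]; linarith [hu.2])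
    rw [show u + β = u + β - 1 + 1 by ring, coe_add_period,
      liftIco_zero_coe_apply ⟨by linarith, by linarith [hu.2]⟩, hwrap, stripeColor_zero hN]
    exact (stripeColor_ne_zero hk).symm

lemma isFiniteUnionOfArcs_stripeColoring_preimage (hβ : 0 < β) (hβ_lt_one : β < 1) (c : Fin 3) :
    IsFiniteUnionOfArcs (stripeColoring β ⁻¹' {c}) := by
  rw [stripeColoring, liftIco_preimage, zero_add, Ico_inter_preimage_floor_div hβ, image_iUnion₂]
  refine isFiniteUnionOfArcs_iUnion _ fun k => ?_
  have := min_le_left (((k : ℕ) + 1 : ℝ) * β) 1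
  nlinarith

end Stripes

theorem exists_arc_coloring_of_le_half {β : ℝ} (hβ : 0 < β) (hβ_half : β ≤ 1 / 2) :
    ∃ f : AddCircle (1 : ℝ) → Fin 3,
      (∀ x, f (x + β) ≠ f x) ∧ ∀ c, IsFiniteUnionOfArcs (f ⁻¹' {c}) :=
  ⟨stripeColoring β, stripeColoring_add_ne hβ hβ_half,
    isFiniteUnionOfArcs_stripeColoring_preimage hβ (by linarith)⟩

theorem three_coloring_by_arcs_of_irrational_rotation_general
    (α : ℝ) (h0 : 0 < α) (h1 : α < 1) :
    ∃ f : AddCircle (1 : ℝ) → Fin 3,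
      (∀ x : AddCircle (1 : ℝ), f (x + (α : AddCircle (1 : ℝ))) ≠ f x) ∧
      ∀ c : Fin 3, ∃ (n : ℕ) (a b : Fin n → ℝ),
        (∀ k, b k - a k < 1) ∧
        f ⁻¹' {c} = ⋃ k, (fun r : ℝ => (r : AddCircle (1 : ℝ))) '' Set.Ico (a k) (b k) := by
  rcases le_or_gt α (1 / 2) with hα | hα
  · exact exists_arc_coloring_of_le_half h0 hα
  · obtain ⟨f, hf, hf_arcs⟩ :=
      exists_arc_coloring_of_le_half (β := 1 - α) (by linarith) (by linarith)
    have hneg : ((1 - α : ℝ) : AddCircle (1 : ℝ)) = -α := by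
      rw [coe_sub, coe_period, zero_sub]
    refine ⟨f, fun x => ?_, hf_arcs⟩
    simpa [hneg] using (hf (x + α)).symm

/-- For irrational `α ∈ (0,1)`, there is a proper 3-coloring
`f : ℝ/ℤ → Fin 3` of the graph induced by the rotation by `α` whose color classes are
finite unions of arcs (images of half-open intervals under the projection `ℝ → ℝ/ℤ`). -/
theorem three_coloring_by_arcs_of_irrational_rotation
    (α : ℝ) (h0 : 0 < α) (h1 : α < 1) (hα : Irrational α) :
    ∃ f : AddCircle (1 : ℝ) → Fin 3,
      (∀ x : AddCircle (1 : ℝ), f (x + (α : AddCircle (1 : ℝ))) ≠ f x) ∧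
      ∀ c : Fin 3, ∃ (n : ℕ) (a b : Fin n → ℝ),
        (∀ k, b k - a k < 1) ∧
        f ⁻¹' {c} = ⋃ k, (fun r : ℝ => (r : AddCircle (1 : ℝ))) '' Set.Ico (a k) (b k) :=
  three_coloring_by_arcs_of_irrational_rotation_general α h0 h1
end
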